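/- arXiv:2210.01892 — 12 statements merged into one kernel-verified Lean document; each statement's English description precedes it below -/
import Mathlib

section
/- For any real D×N matrix W with columns w_1,…,w_N, the sum of the capacities satisfies Σ_{i=1}^N C_i(W) ≤ D. -/
/-!
Let `v_i = Wᵀ w_i` be the `i`-th column of the Gram matrix `WᵀW`, so that
`C_i = ⟪e_i, v_i⟫² / ‖v_i‖²`. All `v_i` lie in `K = range Wᵀ`, of dimension at most `D`.
If `P` is the orthogonal projection onto `K`, then `⟪e_i, v_i⟫ = ⟪P e_i, v_i⟫`, so
Cauchy–Schwarz gives `C_i ≤ ‖P e_i‖² = ⟪e_i, P e_i⟫`, and summing over `i` yields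
`∑ C_i ≤ tr P = dim K ≤ D`.
-/

open scoped BigOperators

/-- The capacity of feature `i` for an embedding matrix `W` with columns
`w_i = W · eᵢ`: `C_i = (w_i·w_i)² / (∑_j (w_i·w_j)²)`. When `w_i = 0` both the
numerator and the denominator vanish, and Lean's convention `0 / 0 = 0` gives
`C_i = 0`, matching the convention in the paper. -/
noncomputable def capacity {D N : ℕ} (W : Matrix (Fin D) (Fin N) ℝ) (i : Fin N) : ℝ :=
  (∑ a, W a i * W a i) ^ 2 / ∑ j, (∑ a, W a i * W a j) ^ 2

open Module
open scoped InnerProductSpace Matrix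

namespace Submodule

variable {E : Type*} [NormedAddCommGroup E] [InnerProductSpace ℝ E]
  (K : Submodule ℝ E) [K.HasOrthogonalProjection]

theorem norm_starProjection_sq (x : E) : ‖K.starProjection x‖ ^ 2 = ⟪x, K.starProjection x⟫_ℝ := by
  rw [← real_inner_self_eq_norm_sq, inner_starProjection_left_eq_right,
    K.starProjection_eq_self_iff.mpr (K.starProjection_apply_mem x)]

theorem inner_sq_le_norm_starProjection_sq_mul (x : E) {v : E} (hv : v ∈ K) :
    ⟪x, v⟫_ℝ ^ 2 ≤ ‖K.starProjection x‖ ^ 2 * ‖v‖ ^ 2 := by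
  rw [← K.starProjection_eq_self_iff.mpr hv, ← inner_starProjection_left_eq_right,
    K.starProjection_eq_self_iff.mpr hv, ← mul_pow, ← sq_abs]
  exact pow_le_pow_left₀ (abs_nonneg _) (abs_real_inner_le_norm _ _) 2

theorem inner_sq_div_norm_sq_le_inner_starProjection (x : E) {v : E} (hv : v ∈ K) :
    ⟪x, v⟫_ℝ ^ 2 / ‖v‖ ^ 2 ≤ ⟪x, K.starProjection x⟫_ℝ := by
  rw [← norm_starProjection_sq]
  exact div_le_of_le_mul₀ (by positivity) (by positivity)
    (K.inner_sq_le_norm_starProjection_sq_mul x hv)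

theorem trace_starProjection [FiniteDimensional ℝ E] :
    LinearMap.trace ℝ E (K.starProjection : E →ₗ[ℝ] E) = finrank ℝ K := by
  have hproj := (LinearMap.isProj_range_iff_isIdempotentElem _).mpr
    (ContinuousLinearMap.isIdempotentElem_toLinearMap_iff.mpr K.isIdempotentElem_starProjection)
  rw [hproj.trace]
  exact congrArg (fun U : Submodule ℝ E => (finrank ℝ U : ℝ)) K.range_starProjection

end Submodule

theorem OrthonormalBasis.sum_inner_sq_div_norm_sq_le_finrank {E ι : Type*}
    [NormedAddCommGroup E] [InnerProductSpace ℝ E] [FiniteDimensional ℝ E] [Fintype ι]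
    (b : OrthonormalBasis ι ℝ E) (K : Submodule ℝ E) {v : ι → E} (hv : ∀ i, v i ∈ K) :
    ∑ i, ⟪b i, v i⟫_ℝ ^ 2 / ‖v i‖ ^ 2 ≤ finrank ℝ K :=
  calc ∑ i, ⟪b i, v i⟫_ℝ ^ 2 / ‖v i‖ ^ 2
      ≤ ∑ i, ⟪b i, K.starProjection (b i)⟫_ℝ :=
        Finset.sum_le_sum fun i _ => K.inner_sq_div_norm_sq_le_inner_starProjection _ (hv i)
    _ = LinearMap.trace ℝ E (K.starProjection : E →ₗ[ℝ] E) :=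
        (LinearMap.trace_eq_sum_inner _ b).symm
    _ = finrank ℝ K := K.trace_starProjection

theorem capacity_eq_inner_sq_div_norm_sq {D N : ℕ} (W : Matrix (Fin D) (Fin N) ℝ) (i : Fin N) :
    capacity W i =
      ⟪EuclideanSpace.basisFun (Fin N) ℝ i, Wᵀ.toEuclideanLin (WithLp.toLp 2 (W · i))⟫_ℝ ^ 2 /
        ‖Wᵀ.toEuclideanLin (WithLp.toLp 2 (W · i))‖ ^ 2 := by
  simp [capacity, EuclideanSpace.inner_single_left, EuclideanSpace.real_norm_sq_eq, Matrix.mulVec,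
    dotProduct, mul_comm]

/-- For any real `D × N` matrix `W`, the total capacity satisfies
`∑ i, C_i(W) ≤ D`. -/
theorem total_capacity_le_dim {D N : ℕ} (W : Matrix (Fin D) (Fin N) ℝ) :
    ∑ i, capacity W i ≤ (D : ℝ) := by
  have hrank : finrank ℝ (LinearMap.range Wᵀ.toEuclideanLin) ≤ D :=
    (LinearMap.finrank_range_le _).trans_eq finrank_euclideanSpace_fin
  simp only [capacity_eq_inner_sq_div_norm_sq]
  exact ((EuclideanSpace.basisFun (Fin N) ℝ).sum_inner_sq_div_norm_sq_le_finrank _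
    fun i => LinearMap.mem_range_self _ _).trans (mod_cast hrank)
end

section
/- Let e_1,…,e_N be the standard basis of ℝ^N and let V ⊆ ℝ^N be a linear subspace of dimension D such that e_i ∉ V^⊥ for all i. Then for any unit vectors v_1,…,v_N ∈ V, Σ_{i=1}^N (v_i·e_i)² ≤ D, with equality if and only if for each i the vector v_i is parallel to the orthogonal projection of e_i onto V. -/
open scoped BigOperators RealInnerProductSpace

/-! For `w ∈ V` one has `⟪w, e i⟫ = ⟪w, P e i⟫`, where `P` is the orthogonal projection onto `V`,
so by Cauchy–Schwarz each term is at most `‖P e i‖²`, with equality exactly when `v i` is parallel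
to `P e i ≠ 0`. Expanding `P e i` in an orthonormal basis `f` of `V` and exchanging the two sums,
`∑ i, ‖P e i‖² = ∑ i, ∑ j, ⟪f j, e i⟫² = ∑ j, ‖f j‖² = dim V`. -/

section

variable {E : Type*} [NormedAddCommGroup E] [InnerProductSpace ℝ E]

theorem real_inner_sq_le_norm_sq_of_norm_eq_one {u : E} (hu : ‖u‖ = 1) (p : E) :
    ⟪u, p⟫ ^ 2 ≤ ‖p‖ ^ 2 :=
  sq_le_sq.mpr (by simpa [hu, abs_norm] using abs_real_inner_le_norm u p)

theorem real_inner_sq_eq_norm_sq_iff_of_norm_eq_one {u p : E} (hu : ‖u‖ = 1) (hp : p ≠ 0) :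
    ⟪u, p⟫ ^ 2 = ‖p‖ ^ 2 ↔ ∃ c : ℝ, u = c • p := by
  calc ⟪u, p⟫ ^ 2 = ‖p‖ ^ 2 ↔ ‖⟪p, u⟫‖ = ‖p‖ * ‖u‖ := by
        rw [hu, mul_one, Real.norm_eq_abs, real_inner_comm, sq_eq_sq_iff_abs_eq_abs, abs_norm]
    _ ↔ p = 0 ∨ ∃ c : ℝ, u = c • p := (norm_inner_eq_norm_tfae ℝ p u).out 0 2
    _ ↔ ∃ c : ℝ, u = c • p := or_iff_right hp

theorem OrthonormalBasis.sum_norm_sq_orthogonalProjectionOnto {ι : Type*} [Fintype ι]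
    (b : OrthonormalBasis ι ℝ E) (K : Submodule ℝ E) [FiniteDimensional ℝ K] :
    ∑ i, ‖(K.orthogonalProjectionOnto (b i) : E)‖ ^ 2 = Module.finrank ℝ K := by
  let f := stdOrthonormalBasis ℝ K
  calc ∑ i, ‖(K.orthogonalProjectionOnto (b i) : E)‖ ^ 2
      = ∑ i, ∑ j, ⟪b i, (f j : E)⟫ ^ 2 := by
        refine Finset.sum_congr rfl fun i _ => ?_
        rw [Submodule.norm_coe, ← f.sum_sq_inner_right]
        simp [real_inner_comm]
    _ = ∑ j, ‖(f j : E)‖ ^ 2 := by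
        rw [Finset.sum_comm]
        exact Finset.sum_congr rfl fun j _ => b.sum_sq_inner_right (f j)
    _ = Module.finrank ℝ K := by simp [Submodule.norm_coe, f.norm_eq_one]

end

/-- Let `e_1, …, e_N` be the standard basis of `ℝ^N` and `V` a subspace of
dimension `D` with `e i ∉ Vᗮ` for all `i`. For any unit vectors `v i ∈ V`,
`∑ i, ⟪v i, e i⟫² ≤ D`, with equality iff each `v i` is parallel to the orthogonal
projection of `e i` onto `V`. -/
theorem sum_inner_sq_le_dim_and_eq_iff_parallel
    {N D : ℕ} (V : Submodule ℝ (EuclideanSpace ℝ (Fin N)))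
    (hV : Module.finrank ℝ V = D)
    (e : Fin N → EuclideanSpace ℝ (Fin N))
    (he : ∀ i, e i = EuclideanSpace.single i (1 : ℝ))
    (hperp : ∀ i, e i ∉ Vᗮ)
    (v : Fin N → EuclideanSpace ℝ (Fin N))
    (hvV : ∀ i, v i ∈ V) (hv : ∀ i, ‖v i‖ = 1) :
    (∑ i, ⟪v i, e i⟫ ^ 2 ≤ (D : ℝ)) ∧
      ((∑ i, ⟪v i, e i⟫ ^ 2 = (D : ℝ)) ↔
        ∀ i, ∃ c : ℝ, v i = c • (V.orthogonalProjection (e i) : EuclideanSpace ℝ (Fin N))) := by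
  set P : Fin N → EuclideanSpace ℝ (Fin N) := fun i => V.orthogonalProjectionOnto (e i)
  have hinner : ∀ i, ⟪v i, e i⟫ = ⟪v i, P i⟫ := fun i =>
    (Submodule.inner_orthogonalProjectionOnto_eq_of_mem_left (⟨v i, hvV i⟩ : V) (e i)).symm
  have hP : ∀ i, P i ≠ 0 := fun i hi =>
    hperp i (Submodule.orthogonalProjectionOnto_eq_zero_iff.mp (Submodule.coe_eq_zero.mp hi))
  have hsum : ∑ i, ‖P i‖ ^ 2 = D := by
    have hbasis : e = EuclideanSpace.basisFun (Fin N) ℝ := by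
      funext i; rw [he, EuclideanSpace.basisFun_apply]
    simp only [P, hbasis, OrthonormalBasis.sum_norm_sq_orthogonalProjectionOnto, hV]
  have hle : ∀ i ∈ Finset.univ, ⟪v i, P i⟫ ^ 2 ≤ ‖P i‖ ^ 2 := fun i _ =>
    real_inner_sq_le_norm_sq_of_norm_eq_one (hv i) (P i)
  simp_rw [hinner, ← hsum]
  refine ⟨Finset.sum_le_sum hle, ?_⟩
  rw [Finset.sum_eq_sum_iff_of_le hle]
  simp only [Finset.mem_univ, forall_const]
  exact forall_congr' fun i => real_inner_sq_eq_norm_sq_iff_of_norm_eq_one (hv i) (hP i)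
end

section
/- Let w_1,…,w_N ∈ ℝ^D be nonzero vectors spanning ℝ^D whose index set cannot be partitioned into two nonempty subsets S, T with w_i·w_j = 0 for all i ∈ S and j ∈ T, and let W be the D×N matrix with columns w_1,…,w_N. If Σ_{i=1}^N C_i(W) = D, then W W^T = μ I_D for some real μ > 0. -/
/-!
Put `M = W Wᵀ`, positive definite because the columns span. The denominator of `C_i` is
`w_iᵀ M w_i`, so Cauchy–Schwarz for the inner product defined by `M`, applied to `w_i` and
`M⁻¹ w_i`, gives `C_i ≤ w_iᵀ M⁻¹ w_i`. These bounds sum to `tr (M⁻¹ W Wᵀ) = D`, so `∑ C_i = D`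
forces equality for every `i`, which makes each `w_i` an eigenvector of `M`. Eigenvectors of the
symmetric `M` for distinct eigenvalues are orthogonal, so irreducibility leaves a single
eigenvalue, and since the `w_i` span, `M` is scalar.
-/

open scoped BigOperators
open Matrix

theorem apply_eq_of_not_exists_split {ι α : Type*} [Fintype ι] [DecidableEq ι]
    {r : ι → ι → Prop} {f : ι → α} (hf : ∀ i j, f i ≠ f j → r i j)
    (hr : ¬ ∃ S : Finset ι, S.Nonempty ∧ Sᶜ.Nonempty ∧ ∀ i ∈ S, ∀ j ∈ Sᶜ, r i j) (i j : ι) :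
    f i = f j := by
  classical
  by_contra hij
  refine hr ⟨Finset.univ.filter (f · = f i), ⟨i, by simp⟩, ⟨j, by simp [Ne.symm hij]⟩,
    fun p hp q hq => hf p q ?_⟩
  simp only [Finset.mem_filter, Finset.mem_univ, true_and, Finset.mem_compl] at hp hq
  rwa [hp, ne_comm]

namespace Matrix

variable {m n ι K : Type*}

theorem PosDef.isSymm {M : Matrix n n ℝ} (hM : M.PosDef) : M.IsSymm :=
  isHermitian_iff_isSymm.1 hM.isHermitian

theorem PosDef.pos_of_smul_one [Nonempty n] [DecidableEq n] {μ : ℝ}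
    (h : (μ • 1 : Matrix n n ℝ).PosDef) : 0 < μ := by
  obtain ⟨i⟩ := ‹Nonempty n›
  simpa using h.diag_pos (i := i)

variable [Fintype m] [Fintype n]

theorem vecMul_injective_of_span_col_eq_top {W : Matrix m n ℝ}
    (hW : Submodule.span ℝ (Set.range W.col) = ⊤) : Function.Injective W.vecMul := by
  rw [← coe_vecMulLinear, injective_iff_map_eq_zero]
  intro x (hx : x ᵥ* W = 0)
  obtain ⟨y, rfl⟩ : ∃ y, W.mulVecLin y = x := by
    rw [← LinearMap.mem_range, W.range_mulVecLin, hW]; trivial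
  rw [← dotProduct_self_eq_zero]
  nth_rw 2 [mulVecLin_apply]
  rw [dotProduct_mulVec, hx, zero_dotProduct]

theorem posDef_mul_transpose_self_of_span_col_eq_top {W : Matrix m n ℝ}
    (hW : Submodule.span ℝ (Set.range W.col) = ⊤) : (W * Wᵀ).PosDef := by
  simpa using PosDef.mul_conjTranspose_self W (vecMul_injective_of_span_col_eq_top hW)

theorem sum_transpose_dotProduct_mulVec_eq_trace [CommRing K] (W : Matrix m n K)
    (A : Matrix m m K) :
    ∑ i, Wᵀ i ⬝ᵥ (A *ᵥ Wᵀ i) = trace (A * (W * Wᵀ)) := by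
  rw [← Matrix.mul_assoc, trace_mul_comm]
  simp only [trace, diag, mul_apply, dotProduct, mulVec, transpose_apply, Finset.mul_sum]

theorem IsSymm.dotProduct_eq_zero_of_mulVec_eq_smul [CommRing K] [IsDomain K] {M : Matrix n n K}
    (hM : M.IsSymm)
    {v w : n → K} {a b : K} (hv : M *ᵥ v = a • v) (hw : M *ᵥ w = b • w) (hab : a ≠ b) :
    v ⬝ᵥ w = 0 := by
  have : a * (v ⬝ᵥ w) = b * (v ⬝ᵥ w) :=
    calc a * (v ⬝ᵥ w) = (M *ᵥ v) ⬝ᵥ w := by rw [hv, smul_dotProduct, smul_eq_mul]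
    _ = v ⬝ᵥ (M *ᵥ w) := by rw [dotProduct_mulVec, ← mulVec_transpose, hM.eq]
    _ = b * (v ⬝ᵥ w) := by rw [hw, dotProduct_smul, smul_eq_mul]
  exact (mul_eq_mul_right_iff.1 this).resolve_left hab

/-- The Cauchy–Schwarz defect for the form `x ⬝ᵥ (M *ᵥ y)` at `w` and `M⁻¹ *ᵥ w`, written as the
`M`-norm of an explicit vector. It also holds when `w ⬝ᵥ (M *ᵥ w) = 0`, as `x / 0 = 0`. -/
theorem IsSymm.dotProduct_inv_mulVec_sub_sq_div_eq [Field K] [DecidableEq n] {M : Matrix n n K}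
    (hM : M.IsSymm) (hdet : IsUnit M.det) (w : n → K) :
    w ⬝ᵥ (M⁻¹ *ᵥ w) - (w ⬝ᵥ w) ^ 2 / (w ⬝ᵥ (M *ᵥ w)) =
      (M⁻¹ *ᵥ w - ((w ⬝ᵥ w) / (w ⬝ᵥ (M *ᵥ w))) • w) ⬝ᵥ
        (M *ᵥ (M⁻¹ *ᵥ w - ((w ⬝ᵥ w) / (w ⬝ᵥ (M *ᵥ w))) • w)) := by
  set y := M⁻¹ *ᵥ w
  have hMy : M *ᵥ y = w := by rw [mulVec_mulVec, mul_nonsing_inv _ hdet, one_mulVec]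
  have hyMw : y ⬝ᵥ (M *ᵥ w) = w ⬝ᵥ w := by
    rw [dotProduct_mulVec, ← mulVec_transpose, hM.eq, hMy]
  rw [mulVec_sub, mulVec_smul, hMy, sub_dotProduct, dotProduct_sub, dotProduct_sub,
    smul_dotProduct, smul_dotProduct, dotProduct_smul, dotProduct_smul, hyMw, dotProduct_comm y w]
  simp only [smul_eq_mul]
  rcases eq_or_ne (w ⬝ᵥ (M *ᵥ w)) 0 with hq | hq
  · simp [hq]
  · field_simp
    ring

theorem eq_smul_one_of_mulVec_eq_smul [CommRing K] [DecidableEq n] {M : Matrix n n K}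
    {v : ι → n → K} (hv : Submodule.span K (Set.range v) = ⊤) {μ : K}
    (h : ∀ i, M *ᵥ v i = μ • v i) : M = μ • 1 := by
  refine toLin'.injective (LinearMap.ext_on hv ?_)
  rintro _ ⟨i, rfl⟩
  simp [h i]

namespace PosDef

theorem sq_dotProduct_div_le [DecidableEq n] {M : Matrix n n ℝ} (hM : M.PosDef) (w : n → ℝ) :
    (w ⬝ᵥ w) ^ 2 / (w ⬝ᵥ (M *ᵥ w)) ≤ w ⬝ᵥ (M⁻¹ *ᵥ w) := by
  rw [← sub_nonneg, hM.isSymm.dotProduct_inv_mulVec_sub_sq_div_eq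
    ((isUnit_iff_isUnit_det M).1 hM.isUnit)]
  simpa only [star_trivial] using hM.posSemidef.dotProduct_mulVec_nonneg _

theorem mulVec_eq_smul_of_sq_dotProduct_div_eq [DecidableEq n] {M : Matrix n n ℝ}
    (hM : M.PosDef) {w : n → ℝ} (h : (w ⬝ᵥ w) ^ 2 / (w ⬝ᵥ (M *ᵥ w)) = w ⬝ᵥ (M⁻¹ *ᵥ w)) :
    M *ᵥ w = ((w ⬝ᵥ (M *ᵥ w)) / (w ⬝ᵥ w)) • w := by
  rcases eq_or_ne w 0 with rfl | hw
  · simp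
  have hdet := (isUnit_iff_isUnit_det M).1 hM.isUnit
  have hinv : M⁻¹ *ᵥ w = ((w ⬝ᵥ w) / (w ⬝ᵥ (M *ᵥ w))) • w := by
    rw [← sub_eq_zero]
    by_contra hu
    have := hM.dotProduct_mulVec_pos hu
    rw [star_trivial, ← hM.isSymm.dotProduct_inv_mulVec_sub_sq_div_eq hdet, h, sub_self] at this
    exact this.false
  have hq : 0 < w ⬝ᵥ (M *ᵥ w) := by simpa using hM.dotProduct_mulVec_pos hw
  have hn : w ⬝ᵥ w ≠ 0 := fun h => hw (dotProduct_self_eq_zero.1 h)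
  have hw' : w = ((w ⬝ᵥ w) / (w ⬝ᵥ (M *ᵥ w))) • (M *ᵥ w) := by
    rw [← mulVec_smul, ← hinv, mulVec_mulVec, mul_nonsing_inv _ hdet, one_mulVec]
  calc M *ᵥ w
      = ((w ⬝ᵥ (M *ᵥ w)) / (w ⬝ᵥ w) * ((w ⬝ᵥ w) / (w ⬝ᵥ (M *ᵥ w)))) • (M *ᵥ w) := by
        rw [div_mul_div_cancel₀ hn, div_self hq.ne', one_smul]
    _ = ((w ⬝ᵥ (M *ᵥ w)) / (w ⬝ᵥ w)) • w := by rw [← smul_smul, ← hw']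

end PosDef

end Matrix

theorem capacity_eq_sq_div_dotProduct_mulVec {D N : ℕ} (W : Matrix (Fin D) (Fin N) ℝ)
    (i : Fin N) :
    capacity W i = (Wᵀ i ⬝ᵥ Wᵀ i) ^ 2 / (Wᵀ i ⬝ᵥ ((W * Wᵀ) *ᵥ Wᵀ i)) := by
  rw [capacity, ← mulVec_mulVec, dotProduct_mulVec, ← mulVec_transpose]
  simp only [dotProduct, mulVec, transpose_apply, sq, mul_comm]

theorem efficient_irreducible_isScalarGram_general
    {D N : ℕ} (W : Matrix (Fin D) (Fin N) ℝ)
    (hspan : Submodule.span ℝ (Set.range fun i => Wᵀ i) = ⊤)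
    (hirr : ¬ ∃ S : Finset (Fin N), S.Nonempty ∧ Sᶜ.Nonempty ∧
        ∀ i ∈ S, ∀ j ∈ Sᶜ, ∑ a, W a i * W a j = 0)
    (heff : ∑ i, capacity W i = (D : ℝ)) :
    ∃ μ : ℝ, 0 < μ ∧ W * Wᵀ = μ • (1 : Matrix (Fin D) (Fin D) ℝ) := by
  set M := W * Wᵀ
  have hM : M.PosDef := posDef_mul_transpose_self_of_span_col_eq_top hspan
  have hle : ∀ i, capacity W i ≤ Wᵀ i ⬝ᵥ (M⁻¹ *ᵥ Wᵀ i) := fun i =>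
    (capacity_eq_sq_div_dotProduct_mulVec W i).trans_le (hM.sq_dotProduct_div_le _)
  have hsum : ∑ i, capacity W i = ∑ i, Wᵀ i ⬝ᵥ (M⁻¹ *ᵥ Wᵀ i) := by
    rw [heff, sum_transpose_dotProduct_mulVec_eq_trace,
      nonsing_inv_mul _ ((isUnit_iff_isUnit_det M).1 hM.isUnit), trace_one, Fintype.card_fin]
  have heq := (Finset.sum_eq_sum_iff_of_le fun i _ => hle i).1 hsum
  set c : Fin N → ℝ := fun i => (Wᵀ i ⬝ᵥ (M *ᵥ Wᵀ i)) / (Wᵀ i ⬝ᵥ Wᵀ i)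
  have heig : ∀ i, M *ᵥ Wᵀ i = c i • Wᵀ i := fun i =>
    hM.mulVec_eq_smul_of_sq_dotProduct_div_eq
      ((capacity_eq_sq_div_dotProduct_mulVec W i).symm.trans (heq i (Finset.mem_univ i)))
  have hc : ∀ i j, c i = c j := apply_eq_of_not_exists_split
    (fun i j => hM.isSymm.dotProduct_eq_zero_of_mulVec_eq_smul (heig i) (heig j)) hirr
  obtain ⟨μ, hμ⟩ : ∃ μ, M = μ • 1 := by
    rcases isEmpty_or_nonempty (Fin N) with _ | ⟨⟨i₀⟩⟩
    · exact ⟨0, eq_smul_one_of_mulVec_eq_smul hspan isEmptyElim⟩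
    · exact ⟨c i₀, eq_smul_one_of_mulVec_eq_smul hspan fun i => hc i i₀ ▸ heig i⟩
  rcases isEmpty_or_nonempty (Fin D) with _ | _
  · exact ⟨1, one_pos, Subsingleton.elim _ _⟩
  · exact ⟨μ, PosDef.pos_of_smul_one (hμ ▸ hM), hμ⟩

/-- If the columns `w_1, …, w_N` of `W` are nonzero, span `ℝ^D`, cannot be
split into two nonempty mutually orthogonal groups, and `∑ i, C_i(W) = D`, then
`W Wᵀ = μ I` for some `μ > 0`. -/
theorem efficient_irreducible_isScalarGram
    {D N : ℕ} (W : Matrix (Fin D) (Fin N) ℝ)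
    (hnz : ∀ i, Wᵀ i ≠ 0)
    (hspan : Submodule.span ℝ (Set.range fun i => Wᵀ i) = ⊤)
    (hirr : ¬ ∃ S : Finset (Fin N), S.Nonempty ∧ Sᶜ.Nonempty ∧
        ∀ i ∈ S, ∀ j ∈ Sᶜ, ∑ a, W a i * W a j = 0)
    (heff : ∑ i, capacity W i = (D : ℝ)) :
    ∃ μ : ℝ, 0 < μ ∧ W * Wᵀ = μ • (1 : Matrix (Fin D) (Fin D) ℝ) :=
  efficient_irreducible_isScalarGram_general W hspan hirr heff
end

section
/- Let R be a real D×N matrix with orthonormal rows (R R^T = I_D), let λ > 0, and let W = √λ · R with columns w_1,…,w_N. Then for every i, C_i(W) = ‖w_i‖²/λ, and consequently Σ_{i=1}^N C_i(W) = D. -/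
open scoped BigOperators
open Matrix

/-- If `R` is a `D × N` matrix with orthonormal rows (`R Rᵀ = I`), `λ > 0`,
and `W = √λ • R`, then `C_i(W) = ‖w_i‖² / λ` for every `i`, and `∑ i, C_i(W) = D`. -/
theorem capacity_of_semiorthogonal_scaled
    {D N : ℕ} (R : Matrix (Fin D) (Fin N) ℝ) (hR : R * Rᵀ = 1)
    (l : ℝ) (hl : 0 < l) (W : Matrix (Fin D) (Fin N) ℝ)
    (hW : W = Real.sqrt l • R) :
    (∀ i, capacity W i = (∑ a, W a i * W a i) / l) ∧
      ∑ i, capacity W i = (D : ℝ) := by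
  set G : Matrix (Fin N) (Fin N) ℝ := Rᵀ * R with hG
  have hGG : G * G = G := by
    rw [hG, Matrix.mul_assoc, ← Matrix.mul_assoc R, hR, Matrix.one_mul]
  have hsq : Real.sqrt l * Real.sqrt l = l := Real.mul_self_sqrt hl.le
  have hdot : ∀ i j, (∑ a, W a i * W a j) = l * G i j := by
    intro i j
    have : G i j = ∑ a, R a i * R a j := by
      simp [hG, Matrix.mul_apply, Matrix.transpose_apply]
    rw [this, Finset.mul_sum]
    apply Finset.sum_congr rfl
    intro a _
    simp [hW, Matrix.smul_apply]
    ring_nf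
    rw [Real.sq_sqrt hl.le]
    ring
  have hsym : ∀ i j, G i j = G j i := by
    intro i j
    simp [hG, Matrix.mul_apply, Matrix.transpose_apply, mul_comm]
  have hdiag : ∀ i, (∑ j, (G i j) ^ 2) = G i i := by
    intro i
    have : (G * G) i i = ∑ j, G i j * G j i := Matrix.mul_apply
    rw [hGG] at this
    rw [this]
    apply Finset.sum_congr rfl
    intro j _
    rw [sq, hsym i j]
  have hcap : ∀ i, capacity W i = G i i := by
    intro i
    unfold capacity
    rw [hdot i i]
    have hden : (∑ j, (∑ a, W a i * W a j) ^ 2) = l ^ 2 * G i i := by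
      rw [← hdiag i, Finset.mul_sum]
      exact Finset.sum_congr rfl fun j _ => by rw [hdot i j, mul_pow]
    rw [hden]
    by_cases h : G i i = 0
    · simp [h]
    · rw [mul_pow]
      field_simp
  constructor
  · intro i
    rw [hcap i, hdot i i, mul_comm, mul_div_assoc, div_self hl.ne', mul_one]
  · have : (∑ i, capacity W i) = Matrix.trace G := by
      rw [Matrix.trace]
      exact Finset.sum_congr rfl fun i _ => hcap i
    rw [this, hG, Matrix.trace_mul_comm, hR, Matrix.trace_one]
    simp
end

section
/- Let W = Q B P, where Q is a D×D real orthogonal matrix, P is an N×N permutation matrix, and B is a rectangular block-diagonal matrix whose k-th diagonal block is √λ_k · R_k with λ_k > 0 and R_k a D_k×N_k semiorthogonal matrix, where Σ_k D_k = D and Σ_k N_k = N. Then Σ_{i=1}^N C_i(W) = D, i.e., W is efficient. -/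
open scoped BigOperators
open Matrix

/-- An identification of `Σ k, Fin (m k)` with `Fin n` when `∑ k, m k = n`, used to view a
block-diagonal matrix (with blocks of sizes `Dk k × Nk k`) as a `D × N` matrix. -/
noncomputable def finSigmaEquiv {K n : ℕ} (m : Fin K → ℕ) (h : ∑ k, m k = n) :
    (Σ k : Fin K, Fin (m k)) ≃ Fin n :=
  Fintype.equivFinOfCardEq (by simpa using h)

lemma proj_sq_row {n p : ℕ} (R : Matrix (Fin p) (Fin n) ℝ) (hR : R * Rᵀ = 1) (a : Fin n) :
    ∑ b, ((Rᵀ * R) a b) ^ 2 = (Rᵀ * R) a a := by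
  have hsymm : (Rᵀ * R)ᵀ = Rᵀ * R := by rw [transpose_mul, transpose_transpose]
  have hidem : (Rᵀ * R) * (Rᵀ * R) = Rᵀ * R := by
    rw [Matrix.mul_assoc, ← Matrix.mul_assoc R, hR, Matrix.one_mul]
  calc ∑ b, ((Rᵀ * R) a b) ^ 2
      = ∑ b, (Rᵀ * R) a b * (Rᵀ * R) b a := by
        refine Finset.sum_congr rfl fun b _ => ?_
        rw [sq]
        congr 1
        conv_lhs => rw [← hsymm]
        rw [transpose_apply]
    _ = ((Rᵀ * R) * (Rᵀ * R)) a a := by rw [Matrix.mul_apply]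
    _ = (Rᵀ * R) a a := by rw [hidem]

lemma cap_term {n p : ℕ} (R : Matrix (Fin p) (Fin n) ℝ) (hR : R * Rᵀ = 1)
    (c : ℝ) (hc : 0 < c) (a : Fin n) :
    (c * (Rᵀ * R) a a) ^ 2 / (∑ b, (c * (Rᵀ * R) a b) ^ 2) = (Rᵀ * R) a a := by
  have hs : ∑ b, (c * (Rᵀ * R) a b) ^ 2 = c ^ 2 * (Rᵀ * R) a a := by
    rw [← proj_sq_row R hR a, Finset.mul_sum]
    exact Finset.sum_congr rfl fun b _ => by ring
  rw [hs]
  rcases eq_or_ne ((Rᵀ * R) a a) 0 with h | h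
  · simp [h]
  · field_simp

set_option maxHeartbeats 1000000 in
/-- If `W = Q B P` with `Q` orthogonal, `P` a permutation matrix, and `B`
block-diagonal with blocks `√λ_k • R_k` (`λ_k > 0`, `R_k` a `D_k × N_k` semiorthogonal
matrix, `∑ D_k = D`, `∑ N_k = N`), then `∑ i, C_i(W) = D`, i.e. `W` is efficient. -/
theorem blockDiagonal_semiorthogonal_efficient
    {D N K : ℕ} (Dk Nk : Fin K → ℕ) (hD : ∑ k, Dk k = D) (hN : ∑ k, Nk k = N)
    (lam : Fin K → ℝ) (hlam : ∀ k, 0 < lam k)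
    (R : ∀ k, Matrix (Fin (Dk k)) (Fin (Nk k)) ℝ)
    (hR : ∀ k, R k * (R k)ᵀ = 1)
    (Q : Matrix (Fin D) (Fin D) ℝ) (hQ : Q * Qᵀ = 1)
    (σ : Equiv.Perm (Fin N))
    (W : Matrix (Fin D) (Fin N) ℝ)
    (hW : W = Q *
        (Matrix.reindex (finSigmaEquiv Dk hD) (finSigmaEquiv Nk hN)
          (Matrix.blockDiagonal' fun k => Real.sqrt (lam k) • R k)) *
        σ.permMatrix ℝ) :
    ∑ i, capacity W i = (D : ℝ) := by
  classical
  set e1 := finSigmaEquiv Dk hD with he1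
  set e2 := finSigmaEquiv Nk hN with he2
  set BDΛ : Matrix (Σ k, Fin (Nk k)) (Σ k, Fin (Nk k)) ℝ :=
    Matrix.blockDiagonal' (fun k => lam k • ((R k)ᵀ * R k)) with hBDΛ
  have hQ' : Qᵀ * Q = 1 := mul_eq_one_comm.mp hQ
  -- the Gram matrix
  have hGram : Wᵀ * W =
      (BDΛ.submatrix e2.symm e2.symm).submatrix ⇑σ.symm ⇑σ.symm := by
    set Bm := Matrix.reindex e1 e2 (Matrix.blockDiagonal' fun k => Real.sqrt (lam k) • R k)
      with hBm
    have hPt : (σ.permMatrix ℝ)ᵀ = (σ.symm.toPEquiv.toMatrix : Matrix (Fin N) (Fin N) ℝ) := by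
      rw [Equiv.toPEquiv_symm, PEquiv.toMatrix_symm]
    have h1 : Wᵀ * W = (σ.permMatrix ℝ)ᵀ * (Bmᵀ * Bm) * σ.permMatrix ℝ := by
      rw [hW]
      simp only [Matrix.transpose_mul, Matrix.mul_assoc]
      rw [← Matrix.mul_assoc Qᵀ Q, hQ', Matrix.one_mul]
    have h2 : Bmᵀ * Bm = BDΛ.submatrix e2.symm e2.symm := by
      rw [hBm, Matrix.reindex_apply, Matrix.transpose_submatrix,
        Matrix.submatrix_mul_equiv, Matrix.blockDiagonal'_transpose,
        ← Matrix.blockDiagonal'_mul]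
      have hb : (fun k => (Real.sqrt (lam k) • R k)ᵀ * (Real.sqrt (lam k) • R k)) =
          fun k => lam k • ((R k)ᵀ * R k) := by
        funext k
        ext a b
        simp only [Matrix.mul_apply, Matrix.smul_apply, Matrix.transpose_apply, smul_eq_mul,
          Finset.mul_sum]
        refine Finset.sum_congr rfl fun c _ => ?_
        linear_combination (R k c a * R k c b) * Real.mul_self_sqrt (hlam k).le
      rw [hb]
    rw [h1, h2, PEquiv.mul_toMatrix_toPEquiv, hPt, PEquiv.toMatrix_toPEquiv_mul,
      Matrix.submatrix_submatrix]
    rfl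
  have hentry : ∀ i j, (∑ a, W a i * W a j) = BDΛ (e2.symm (σ.symm i)) (e2.symm (σ.symm j)) := by
    intro i j
    have := congrFun (congrFun hGram i) j
    rw [Matrix.mul_apply] at this
    simp only [Matrix.transpose_apply] at this
    rw [this]
    rfl
  have hcap : ∀ i, capacity W i =
      (BDΛ (e2.symm (σ.symm i)) (e2.symm (σ.symm i))) ^ 2 /
        ∑ j, (BDΛ (e2.symm (σ.symm i)) (e2.symm (σ.symm j))) ^ 2 := by
    intro i
    unfold capacity
    simp only [hentry]
  set ψ : (Σ k, Fin (Nk k)) ≃ Fin N := e2.trans σ with hψ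
  have hψs : ∀ i, ψ.symm i = e2.symm (σ.symm i) := fun i => rfl
  have hf : ∀ i, capacity W i = (fun s => (BDΛ s s) ^ 2 / ∑ t, (BDΛ s t) ^ 2) (ψ.symm i) := by
    intro i
    rw [hcap i]
    simp only [hψs]
    congr 1
    exact (Equiv.sum_comp ψ.symm (fun t => (BDΛ (e2.symm (σ.symm i)) t) ^ 2)).symm ▸
      (Finset.sum_congr rfl fun j _ => rfl)
  have hdiag : ∀ (k : Fin K) (a : Fin (Nk k)),
      BDΛ ⟨k, a⟩ ⟨k, a⟩ = lam k * ((R k)ᵀ * R k) a a := by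
    intro k a
    rw [hBDΛ, Matrix.blockDiagonal'_apply_eq]
    simp
  have hin : ∀ (k : Fin K) (a : Fin (Nk k)),
      ∑ t : Σ l, Fin (Nk l), (BDΛ ⟨k, a⟩ t) ^ 2
        = ∑ b, (lam k * ((R k)ᵀ * R k) a b) ^ 2 := by
    intro k a
    rw [← Finset.univ_sigma_univ, Finset.sum_sigma]
    rw [Finset.sum_eq_single k]
    · refine Finset.sum_congr rfl fun b _ => ?_
      rw [hBDΛ, Matrix.blockDiagonal'_apply_eq]
      simp
    · intro l _ hl
      refine Finset.sum_eq_zero fun b _ => ?_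
      rw [hBDΛ, Matrix.blockDiagonal'_apply_ne _ _ _ (Ne.symm hl)]
      simp
    · intro h
      exact absurd (Finset.mem_univ k) h
  have htr : ∀ k : Fin K, ∑ a, ((R k)ᵀ * R k) a a = (Dk k : ℝ) := by
    intro k
    have h1 : ∑ a, ((R k)ᵀ * R k) a a = Matrix.trace ((R k)ᵀ * R k) := rfl
    rw [h1, Matrix.trace_mul_comm, hR k, Matrix.trace_one]
    simp
  have h2 : ∑ i, capacity W i = ∑ s : Σ k, Fin (Nk k), ((BDΛ s s) ^ 2 / ∑ t, (BDΛ s t) ^ 2) := by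
    rw [Finset.sum_congr rfl fun i _ => hf i]
    exact Fintype.sum_equiv ψ.symm _ _ (fun i => rfl)
  have h3 : ∑ s : Σ k, Fin (Nk k), ((BDΛ s s) ^ 2 / ∑ t, (BDΛ s t) ^ 2)
      = ∑ k, ∑ a, ((BDΛ ⟨k, a⟩ ⟨k, a⟩) ^ 2 / ∑ t, (BDΛ ⟨k, a⟩ t) ^ 2) := by
    rw [← Finset.univ_sigma_univ, Finset.sum_sigma]
  rw [h2, h3]
  have h4 : ∀ (k : Fin K) (a : Fin (Nk k)),
      (BDΛ ⟨k, a⟩ ⟨k, a⟩) ^ 2 / ∑ t, (BDΛ ⟨k, a⟩ t) ^ 2 = ((R k)ᵀ * R k) a a := by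
    intro k a
    rw [hdiag, hin]
    exact cap_term (R k) (hR k) (lam k) (hlam k) a
  calc ∑ k, ∑ a, ((BDΛ ⟨k, a⟩ ⟨k, a⟩) ^ 2 / ∑ t, (BDΛ ⟨k, a⟩ t) ^ 2)
      = ∑ k, ∑ a, ((R k)ᵀ * R k) a a :=
        Finset.sum_congr rfl fun k _ => Finset.sum_congr rfl fun a _ => h4 k a
    _ = ∑ k, (Dk k : ℝ) := Finset.sum_congr rfl fun k _ => htr k
    _ = (D : ℝ) := by rw [← Nat.cast_sum, hD]
end

section
/- Let W be a real D×N matrix with nonzero columns w_1,…,w_N such that Σ_{i=1}^N C_i(W) = D. Then W can be written as W = Q B P, where Q is a D×D real orthogonal matrix, P is an N×N permutation matrix, and B is a rectangular block-diagonal matrix whose k-th diagonal block is √λ_k · R_k with λ_k > 0 and R_k a D_k×N_k semiorthogonal matrix, where Σ_k D_k = D and Σ_k N_k = N. -/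
open scoped BigOperators
open Matrix

section Lagrange

variable {ι : Type*} [Fintype ι]

theorem sum_mul_sum_div_sub_sq_sum (p d : ι → ℝ) (hpd : ∀ a, p a ≠ 0 → d a ≠ 0) :
    (∑ a, p a * d a) * (∑ a, p a / d a) - (∑ a, p a) ^ 2 =
      (∑ a, ∑ b, p a * p b * (d a - d b) ^ 2 / (d a * d b)) / 2 := by
  have hterm : ∀ a b, p a * p b * (d a - d b) ^ 2 / (d a * d b) =
      p a * d a * (p b / d b) + p b * d b * (p a / d a) - 2 * (p a * p b) := by
    intro a b
    by_cases ha : p a = 0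
    · simp [ha]
    by_cases hb : p b = 0
    · simp [hb]
    have := hpd a ha
    have := hpd b hb
    field_simp
    ring
  simp only [hterm, Finset.sum_sub_distrib, Finset.sum_add_distrib, ← Finset.mul_sum,
    ← Finset.sum_mul]
  ring

variable {p d : ι → ℝ}

omit [Fintype ι] in
theorem lagrange_term_nonneg (hp : 0 ≤ p) (hd : 0 ≤ d) (a b : ι) :
    0 ≤ p a * p b * (d a - d b) ^ 2 / (d a * d b) :=
  div_nonneg (mul_nonneg (mul_nonneg (hp a) (hp b)) (sq_nonneg _)) (mul_nonneg (hd a) (hd b))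

theorem sq_sum_le_sum_mul_sum_div (hp : 0 ≤ p) (hd : 0 ≤ d) (hpd : ∀ a, p a ≠ 0 → d a ≠ 0) :
    (∑ a, p a) ^ 2 ≤ (∑ a, p a * d a) * (∑ a, p a / d a) := by
  have := sum_mul_sum_div_sub_sq_sum p d hpd
  have : 0 ≤ ∑ a, ∑ b, p a * p b * (d a - d b) ^ 2 / (d a * d b) :=
    Finset.sum_nonneg fun a _ => Finset.sum_nonneg fun b _ => lagrange_term_nonneg hp hd a b
  linarith

theorem eq_of_sq_sum_eq_sum_mul_sum_div (hp : 0 ≤ p) (hd : 0 ≤ d)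
    (hpd : ∀ a, p a ≠ 0 → d a ≠ 0)
    (h : (∑ a, p a) ^ 2 = (∑ a, p a * d a) * (∑ a, p a / d a))
    {a b : ι} (ha : p a ≠ 0) (hb : p b ≠ 0) : d a = d b := by
  have hzero : ∑ a, ∑ b, p a * p b * (d a - d b) ^ 2 / (d a * d b) = 0 := by
    linarith [sum_mul_sum_div_sub_sq_sum p d hpd]
  rw [Fintype.sum_eq_zero_iff_of_nonneg fun a =>
    Finset.sum_nonneg fun b _ => lagrange_term_nonneg hp hd a b] at hzero
  have hab := congrFun ((Fintype.sum_eq_zero_iff_of_nonneg (lagrange_term_nonneg hp hd a)).1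
    (congrFun hzero a)) b
  simpa [ha, hb, hpd a ha, hpd b hb, sub_eq_zero] using hab

end Lagrange

theorem sum_div_self_le_card {ι : Type*} [Fintype ι] (x : ι → ℝ) :
    ∑ a, x a / x a ≤ Fintype.card ι := by
  simpa using Finset.sum_le_sum fun a (_ : a ∈ Finset.univ) => div_self_le_one (x a)

theorem exists_fin_surjective_injective_comp_eq {α β : Type*} [Fintype α] [DecidableEq β]
    (d : α → β) : ∃ (K : ℕ) (f : α → Fin K) (c : Fin K → β),
      Function.Surjective f ∧ Function.Injective c ∧ c ∘ f = d := by
  let e := Fintype.equivFin (Set.range d)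
  exact ⟨_, e ∘ Set.rangeFactorization d, Subtype.val ∘ e.symm,
    e.surjective.comp Set.rangeFactorization_surjective,
    Subtype.val_injective.comp e.symm.injective, funext fun a => by simp [Set.rangeFactorization]⟩

section Capacity

variable {D N : ℕ}

theorem capacity_eq_gram (W : Matrix (Fin D) (Fin N) ℝ) (i : Fin N) :
    capacity W i = ((Wᵀ * W) i i) ^ 2 / (Wᵀ * W * (Wᵀ * W)) i i := by
  simp only [capacity, mul_apply, transpose_apply, sq]
  congr 1
  refine Finset.sum_congr rfl fun j _ => ?_
  congr 1
  exact Finset.sum_congr rfl fun a _ => mul_comm _ _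

theorem capacity_mul_of_transpose_mul_eq_one {U : Matrix (Fin D) (Fin D) ℝ} (hU : Uᵀ * U = 1)
    (W : Matrix (Fin D) (Fin N) ℝ) (i : Fin N) : capacity (U * W) i = capacity W i := by
  have hgram : (U * W)ᵀ * (U * W) = Wᵀ * W := by
    rw [transpose_mul, Matrix.mul_assoc, ← Matrix.mul_assoc Uᵀ, hU, Matrix.one_mul]
  rw [capacity_eq_gram, capacity_eq_gram, hgram]

theorem mul_transpose_self_apply_nonneg (V : Matrix (Fin D) (Fin N) ℝ) (a : Fin D) :
    0 ≤ (V * Vᵀ) a a := by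
  simp only [mul_apply, transpose_apply]
  exact Finset.sum_nonneg fun j _ => mul_self_nonneg _

theorem sq_le_mul_transpose_self_apply (V : Matrix (Fin D) (Fin N) ℝ) (a : Fin D) (i : Fin N) :
    V a i ^ 2 ≤ (V * Vᵀ) a a := by
  simp only [mul_apply, transpose_apply, sq]
  exact Finset.single_le_sum (f := fun j => V a j * V a j) (fun j _ => mul_self_nonneg _)
    (Finset.mem_univ i)

theorem mul_transpose_self_apply_ne_zero {V : Matrix (Fin D) (Fin N) ℝ} {a : Fin D} {i : Fin N}
    (h : V a i ≠ 0) : (V * Vᵀ) a a ≠ 0 :=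
  (lt_of_lt_of_le (sq_pos_of_ne_zero h) (sq_le_mul_transpose_self_apply V a i)).ne'

theorem sum_sum_sq_div_mul_transpose_self (V : Matrix (Fin D) (Fin N) ℝ) :
    ∑ i, ∑ a, V a i ^ 2 / (V * Vᵀ) a a = ∑ a, (V * Vᵀ) a a / (V * Vᵀ) a a := by
  rw [Finset.sum_comm]
  refine Finset.sum_congr rfl fun a _ => ?_
  simp only [← Finset.sum_div, mul_apply, transpose_apply, sq]

variable {V : Matrix (Fin D) (Fin N) ℝ}

theorem capacity_of_isDiag (hV : (V * Vᵀ).IsDiag) (i : Fin N) :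
    capacity V i = (∑ a, V a i ^ 2) ^ 2 / ∑ a, V a i ^ 2 * (V * Vᵀ) a a := by
  have hgram2 : Vᵀ * V * (Vᵀ * V) = Vᵀ * diagonal (V * Vᵀ).diag * V := by
    rw [hV.diagonal_diag]; simp only [Matrix.mul_assoc]
  rw [capacity_eq_gram, hgram2]
  congr 1
  · simp only [mul_apply, transpose_apply, sq]
  · rw [mul_apply]
    simp only [mul_diagonal, transpose_apply, diag_apply]
    exact Finset.sum_congr rfl fun a _ => by ring

theorem capacity_le_of_isDiag (hV : (V * Vᵀ).IsDiag) (i : Fin N) :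
    capacity V i ≤ ∑ a, V a i ^ 2 / (V * Vᵀ) a a := by
  have hrhs : 0 ≤ ∑ a, V a i ^ 2 / (V * Vᵀ) a a :=
    Finset.sum_nonneg fun a _ => div_nonneg (sq_nonneg _) (mul_transpose_self_apply_nonneg V a)
  rw [capacity_of_isDiag hV]
  rcases (Finset.sum_nonneg fun a _ => mul_nonneg (sq_nonneg (V a i))
    (mul_transpose_self_apply_nonneg V a)).eq_or_lt with hA | hA
  · rwa [← hA, div_zero]
  rw [div_le_iff₀ hA, mul_comm]
  exact sq_sum_le_sum_mul_sum_div (fun a => sq_nonneg _) (mul_transpose_self_apply_nonneg V)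
    fun a ha => mul_transpose_self_apply_ne_zero (pow_ne_zero_iff two_ne_zero |>.1 ha)

theorem capacity_eq_and_ne_zero_of_sum_capacity_eq (hV : (V * Vᵀ).IsDiag)
    (heff : ∑ i, capacity V i = D) :
    (∀ i, capacity V i = ∑ a, V a i ^ 2 / (V * Vᵀ) a a) ∧ ∀ a, (V * Vᵀ) a a ≠ 0 := by
  have hCT : ∑ i, capacity V i ≤ ∑ i, ∑ a, V a i ^ 2 / (V * Vᵀ) a a :=
    Finset.sum_le_sum fun i _ => capacity_le_of_isDiag hV i
  have hTd := sum_sum_sq_div_mul_transpose_self V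
  have hdD : ∑ a, (V * Vᵀ) a a / (V * Vᵀ) a a ≤ D := by
    simpa using sum_div_self_le_card fun a => (V * Vᵀ) a a
  constructor
  · have hsum : ∑ i, capacity V i = ∑ i, ∑ a, V a i ^ 2 / (V * Vᵀ) a a := by linarith
    exact fun i => (Finset.sum_eq_sum_iff_of_le fun i _ => capacity_le_of_isDiag hV i).1 hsum i
      (Finset.mem_univ i)
  · have hsum : ∑ a, (V * Vᵀ) a a / (V * Vᵀ) a a = ∑ _a : Fin D, (1 : ℝ) := by
      simp only [Finset.sum_const, Finset.card_univ, Fintype.card_fin, nsmul_eq_mul, mul_one]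
      linarith
    intro a ha
    have := (Finset.sum_eq_sum_iff_of_le fun a _ => div_self_le_one _).1 hsum a (Finset.mem_univ a)
    simp [ha] at this

theorem mul_transpose_self_apply_eq_of_sum_capacity_eq (hV : (V * Vᵀ).IsDiag)
    (heff : ∑ i, capacity V i = D) {i : Fin N} {a b : Fin D} (ha : V a i ≠ 0) (hb : V b i ≠ 0) :
    (V * Vᵀ) a a = (V * Vᵀ) b b := by
  obtain ⟨hC, hd⟩ := capacity_eq_and_ne_zero_of_sum_capacity_eq hV heff
  have hA : 0 < ∑ c, V c i ^ 2 * (V * Vᵀ) c c :=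
    Finset.sum_pos' (fun c _ => mul_nonneg (sq_nonneg _) (mul_transpose_self_apply_nonneg V c))
      ⟨a, Finset.mem_univ a, mul_pos (sq_pos_of_ne_zero ha)
        ((mul_transpose_self_apply_nonneg V a).lt_of_ne' (hd a))⟩
  have hCi := hC i
  rw [capacity_of_isDiag hV, div_eq_iff hA.ne', mul_comm] at hCi
  exact eq_of_sq_sum_eq_sum_mul_sum_div (p := fun c => V c i ^ 2) (fun c => sq_nonneg _)
    (mul_transpose_self_apply_nonneg V) (fun c _ => hd c) hCi (pow_ne_zero 2 ha)
    (pow_ne_zero 2 hb)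

end Capacity

theorem exists_orthogonal_mul_isDiag {m n : Type*} [Fintype m] [DecidableEq m] [Fintype n]
    (W : Matrix m n ℝ) : ∃ U ∈ orthogonalGroup m ℝ, ∃ V : Matrix m n ℝ,
      W = U * V ∧ (V * Vᵀ).IsDiag := by
  have hS : (W * Wᵀ).IsHermitian := by simpa using isHermitian_mul_conjTranspose_self W
  have hdiag := hS.conjStarAlgAut_star_eigenvectorUnitary
  rw [Unitary.conjStarAlgAut_star_apply] at hdiag
  set U : Matrix m m ℝ := (hS.eigenvectorUnitary : Matrix m m ℝ)
  have hU : U ∈ orthogonalGroup m ℝ := hS.eigenvectorUnitary.2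
  have hstar : star U = Uᵀ := by simp [star_eq_conjTranspose]
  refine ⟨U, hU, Uᵀ * W, ?_, ?_⟩
  · rw [← Matrix.mul_assoc, (mem_orthogonalGroup_iff _ _).1 hU, Matrix.one_mul]
  · rw [hstar] at hdiag
    rw [transpose_mul, transpose_transpose, Matrix.mul_assoc, ← Matrix.mul_assoc W,
      ← Matrix.mul_assoc, hdiag]
    exact isDiag_diagonal _

theorem permMatrix_mem_orthogonalGroup {m R : Type*} [Fintype m] [DecidableEq m] [CommRing R]
    (σ : Equiv.Perm m) : σ.permMatrix R ∈ orthogonalGroup m R := by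
  rw [mem_orthogonalGroup_iff, transpose_permMatrix, ← permMatrix_mul, inv_mul_cancel,
    permMatrix_one]

theorem submatrix_eq_permMatrix_mul_reindex_mul_permMatrix {α m n m' n' : Type*}
    [Fintype m] [Fintype n] [DecidableEq m] [DecidableEq n] [NonAssocSemiring α]
    (X : Matrix m' n' α) (eD : m ≃ m') (eN : n ≃ n') (ED : m' ≃ m) (EN : n' ≃ n) :
    X.submatrix eD eN =
      Equiv.Perm.permMatrix α (eD.trans ED) * reindex ED EN X *
        Equiv.Perm.permMatrix α (eN.trans EN).symm := by
  rw [PEquiv.toMatrix_toPEquiv_mul, PEquiv.mul_toMatrix_toPEquiv]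
  ext a i
  simp

section Fibers

variable {m κ : Type*} [Fintype m] [DecidableEq κ]

def fiberSize (f : m → κ) (k : κ) : ℕ := Fintype.card {a // f a = k}

noncomputable def fiberEquiv (f : m → κ) : m ≃ Σ k, Fin (fiberSize f k) :=
  (Equiv.sigmaFiberEquiv f).symm.trans (Equiv.sigmaCongrRight fun _ => Fintype.equivFin _)

theorem fiberEquiv_fst (f : m → κ) (a : m) : (fiberEquiv f a).1 = f a := rfl

theorem apply_fiberEquiv_symm (f : m → κ) (x : Σ k, Fin (fiberSize f k)) :
    f ((fiberEquiv f).symm x) = x.1 :=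
  (fiberEquiv_fst f _).symm.trans (congrArg Sigma.fst ((fiberEquiv f).apply_symm_apply x))

theorem sum_fiberSize [Fintype κ] (f : m → κ) : ∑ k, fiberSize f k = Fintype.card m := by
  simpa using (Fintype.card_congr (fiberEquiv f)).symm

end Fibers

namespace Matrix

variable {α m n κ : Type*} [Fintype m] [Fintype n] [DecidableEq κ]

noncomputable def fiberBlock (M : Matrix m n α) (f : m → κ) (g : n → κ) (k : κ) :
    Matrix (Fin (fiberSize f k)) (Fin (fiberSize g k)) α :=
  M.submatrix (fun p => (fiberEquiv f).symm ⟨k, p⟩) (fun q => (fiberEquiv g).symm ⟨k, q⟩)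

theorem fiberBlock_diagonal_comp [DecidableEq m] [NonAssocSemiring α] (c : κ → α) (f : m → κ)
    (k : κ) : (diagonal (c ∘ f)).fiberBlock f f k = c k • 1 := by
  rw [fiberBlock, submatrix_diagonal _ _ fun p q h => by simpa using h, smul_one_eq_diagonal]
  simp only [Function.comp_def, apply_fiberEquiv_symm]

variable {M : Matrix m n α} {f : m → κ} {g : n → κ}

theorem blockDiagonal'_fiberBlock_submatrix [Zero α] (hM : ∀ a i, f a ≠ g i → M a i = 0) :
    (blockDiagonal' (M.fiberBlock f g)).submatrix (fiberEquiv f) (fiberEquiv g) = M := by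
  ext a i
  obtain ⟨⟨k, p⟩, rfl⟩ := (fiberEquiv f).symm.surjective a
  obtain ⟨⟨l, q⟩, rfl⟩ := (fiberEquiv g).symm.surjective i
  rw [submatrix_apply, Equiv.apply_symm_apply, Equiv.apply_symm_apply]
  by_cases hkl : k = l
  · subst hkl
    rw [blockDiagonal'_apply_eq, fiberBlock, submatrix_apply]
  · rw [blockDiagonal'_apply_ne _ _ _ hkl, hM _ _ (by simpa [apply_fiberEquiv_symm] using hkl)]

theorem fiberBlock_mul_transpose [Fintype κ] [NonUnitalNonAssocSemiring α]
    (hM : ∀ a i, f a ≠ g i → M a i = 0) (k : κ) :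
    M.fiberBlock f g k * (M.fiberBlock f g k)ᵀ = (M * Mᵀ).fiberBlock f f k := by
  ext p p'
  simp only [fiberBlock, mul_apply, transpose_apply, submatrix_apply]
  rw [← (fiberEquiv g).symm.sum_comp, Fintype.sum_sigma, Fintype.sum_eq_single k]
  intro l hl
  refine Finset.sum_eq_zero fun q _ => ?_
  rw [hM _ _ (by simpa [apply_fiberEquiv_symm] using Ne.symm hl), zero_mul]

end Matrix

theorem exists_semiorthogonal_of_mul_transpose_eq_smul_one {m n : Type*} [Fintype n]
    [DecidableEq m] {A : Matrix m n ℝ} {c : ℝ} (hc : 0 < c) (hA : A * Aᵀ = c • 1) :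
    ∃ R : Matrix m n ℝ, R * Rᵀ = 1 ∧ A = √c • R := by
  have hsqrt : √c ≠ 0 := (Real.sqrt_pos.2 hc).ne'
  refine ⟨(√c)⁻¹ • A, ?_, by rw [smul_smul, mul_inv_cancel₀ hsqrt, one_smul]⟩
  rw [transpose_smul, Matrix.smul_mul, Matrix.mul_smul, hA, smul_smul, smul_smul, ← mul_inv,
    Real.mul_self_sqrt hc.le, inv_mul_cancel₀ hc.ne', one_smul]

theorem exists_fiberBlocks_of_sum_capacity_eq {D N : ℕ} {V : Matrix (Fin D) (Fin N) ℝ}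
    (hV : (V * Vᵀ).IsDiag) (heff : ∑ i, capacity V i = D) (hcol : ∀ i, ∃ a, V a i ≠ 0) :
    ∃ (K : ℕ) (f : Fin D → Fin K) (g : Fin N → Fin K) (lam : Fin K → ℝ), (∀ k, 0 < lam k) ∧
      (∀ a i, f a ≠ g i → V a i = 0) ∧
      ∀ k, V.fiberBlock f g k * (V.fiberBlock f g k)ᵀ = lam k • 1 := by
  choose a₀ ha₀ using hcol
  obtain ⟨K, f, lam, hf, hlam, hfac⟩ := exists_fin_surjective_injective_comp_eq (V * Vᵀ).diag
  let g : Fin N → Fin K := f ∘ a₀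
  have hd : ∀ a, lam (f a) = (V * Vᵀ) a a := congrFun hfac
  have hblock : ∀ a i, f a ≠ g i → V a i = 0 := fun a i h => by
    by_contra hne
    exact h (hlam ((hd a).trans
      ((mul_transpose_self_apply_eq_of_sum_capacity_eq hV heff hne (ha₀ i)).trans (hd _).symm)))
  have hlam_pos : ∀ k, 0 < lam k := fun k => by
    obtain ⟨a, rfl⟩ := hf k
    rw [hd]
    exact (mul_transpose_self_apply_nonneg V a).lt_of_ne'
      ((capacity_eq_and_ne_zero_of_sum_capacity_eq hV heff).2 a)
  refine ⟨K, f, g, lam, hlam_pos, hblock, fun k => ?_⟩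
  rw [fiberBlock_mul_transpose hblock, ← hV.diagonal_diag, ← hfac, fiberBlock_diagonal_comp]

/-- Every efficient matrix (nonzero columns and `∑ i, C_i(W) = D`) can be
written as `W = Q B P` with `Q` orthogonal, `P` a permutation matrix, and `B`
block-diagonal with blocks `√λ_k • R_k`, where `λ_k > 0`, `R_k` is a `D_k × N_k`
semiorthogonal matrix, `∑ D_k = D` and `∑ N_k = N`. -/
theorem efficient_eq_blockDiagonal_semiorthogonal
    {D N : ℕ} (W : Matrix (Fin D) (Fin N) ℝ)
    (hnz : ∀ i, Wᵀ i ≠ 0)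
    (heff : ∑ i, capacity W i = (D : ℝ)) :
    ∃ (K : ℕ) (Dk Nk : Fin K → ℕ) (hD : ∑ k, Dk k = D) (hN : ∑ k, Nk k = N)
      (lam : Fin K → ℝ) (_ : ∀ k, 0 < lam k)
      (R : ∀ k, Matrix (Fin (Dk k)) (Fin (Nk k)) ℝ) (_ : ∀ k, R k * (R k)ᵀ = 1)
      (Q : Matrix (Fin D) (Fin D) ℝ) (_ : Q * Qᵀ = 1)
      (σ : Equiv.Perm (Fin N)),
      W = Q *
          (Matrix.reindex (finSigmaEquiv Dk hD) (finSigmaEquiv Nk hN)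
            (Matrix.blockDiagonal' fun k => Real.sqrt (lam k) • R k)) *
          σ.permMatrix ℝ := by
  obtain ⟨U, hU, V, rfl, hV⟩ := exists_orthogonal_mul_isDiag W
  have hVeff : ∑ i, capacity V i = D := by
    simpa only [capacity_mul_of_transpose_mul_eq_one ((mem_orthogonalGroup_iff' _ _).1 hU)]
      using heff
  have hcol : ∀ i, ∃ a, V a i ≠ 0 := fun i => by
    by_contra! h
    exact hnz i (funext fun a => by simp [mul_apply, h])
  obtain ⟨K, f, g, lam, hlam_pos, hblock, hgram⟩ :=
    exists_fiberBlocks_of_sum_capacity_eq hV hVeff hcol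
  choose R hR hVR using fun k =>
    exists_semiorthogonal_of_mul_transpose_eq_smul_one (hlam_pos k) (hgram k)
  have hD : ∑ k, fiberSize f k = D := by simpa using sum_fiberSize f
  have hN : ∑ k, fiberSize g k = N := by simpa using sum_fiberSize g
  let π : Equiv.Perm (Fin D) := (fiberEquiv f).trans (finSigmaEquiv _ hD)
  let σ : Equiv.Perm (Fin N) := ((fiberEquiv g).trans (finSigmaEquiv _ hN)).symm
  refine ⟨K, fiberSize f, fiberSize g, hD, hN, lam, hlam_pos, R, hR, U * π.permMatrix ℝ,
    (mem_orthogonalGroup_iff _ _).1 (mul_mem hU (permMatrix_mem_orthogonalGroup π)), σ, ?_⟩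
  rw [Matrix.mul_assoc U, Matrix.mul_assoc U, ← funext hVR,
    ← submatrix_eq_permMatrix_mul_reindex_mul_permMatrix, blockDiagonal'_fiberBlock_submatrix hblock]
end

section
/- Let D ≤ N be positive integers and let C_1,…,C_N be real numbers with 0 ≤ C_i ≤ 1 for all i and Σ_{i=1}^N C_i = D. Then there exists a D×N real semiorthogonal matrix W (i.e., W W^T = I_D) whose i-th column w_i satisfies ‖w_i‖² = C_i for all i; in particular, C_i(W) = C_i for all i. -/
open scoped BigOperators
open Matrix

/-!
Since `Wᵀ W` is an orthogonal projection when `W Wᵀ = 1`, `capacity W i = ‖w_i‖²`, so it suffices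
to realise every point `C` of the hypersimplex `{C ∈ [0,1]^N | ∑ C = D}` as the squared column
norms of a semiorthogonal `D × N` matrix. This goes by induction on `N`. If `C p + C q ≤ 1` for
some `p ≠ q`, realise the profile in which `p` and `q` are merged into one feature of weight
`C p + C q`, and split that column `w` into `a • w` and `b • w` with `a² + b² = 1`, which keeps
`W Wᵀ = 1`. Otherwise the complementary profile `1 - C` has such a pair, and completing the rows
of a realisation of `1 - C` (with `N - D` rows) to an orthonormal basis of `ℝ^N` gives the
remaining `D` rows of a realisation of `C`.
-/

open Fintype

theorem exists_sq_add_sq_eq_one_and_sq_mul_eq {s t : ℝ} (hs : 0 ≤ s) (ht : 0 ≤ t) :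
    ∃ a b : ℝ, a ^ 2 + b ^ 2 = 1 ∧ a ^ 2 * (s + t) = s ∧ b ^ 2 * (s + t) = t := by
  rcases (add_nonneg hs ht).eq_or_lt with hst | hst
  · exact ⟨1, 0, by norm_num, by linarith, by linarith⟩
  · refine ⟨√(s / (s + t)), √(t / (s + t)), ?_, ?_, ?_⟩ <;>
      rw [Real.sq_sqrt (by positivity)]
    · rw [Real.sq_sqrt (by positivity), ← add_div, div_self hst.ne']
    · exact div_mul_cancel₀ s hst.ne'
    · exact div_mul_cancel₀ t hst.ne'

theorem sum_update_comp_some_add {κ M : Type*} [AddCommMonoid M] [Fintype κ] [DecidableEq κ]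
    (g : Option κ → M) (p : κ) :
    ∑ y, Function.update (g ∘ some) p (g (some p) + g none) y = ∑ x, g x := by
  rw [Finset.sum_update_of_mem (Finset.mem_univ p), Fintype.sum_option,
    ← Finset.add_sum_erase _ _ (Finset.mem_univ p), Finset.sdiff_singleton_eq_erase]
  simp only [Function.comp_apply]
  abel

theorem orthonormal_toLp_rows_iff {ι κ : Type*} [Fintype ι] [DecidableEq κ]
    {V : Matrix κ ι ℝ} :
    Orthonormal ℝ (fun k => WithLp.toLp 2 (V k) : κ → EuclideanSpace ℝ ι) ↔ V * Vᵀ = 1 := by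
  rw [orthonormal_iff_ite, ← Matrix.ext_iff]
  simp [mul_apply, one_apply, PiLp.inner_apply, mul_comm]

def hypersimplex (ι : Type*) [Fintype ι] (D : ℕ) : Set (ι → ℝ) :=
  {C | (∀ x, C x ∈ Set.Icc 0 1) ∧ ∑ x, C x = D}

section Hypersimplex

variable {ι κ : Type*} [Fintype ι] {D : ℕ} {C : ι → ℝ}

theorem le_card_of_mem_hypersimplex (hC : C ∈ hypersimplex ι D) : D ≤ card ι := by
  have : ∑ x, C x ≤ ∑ _x : ι, (1 : ℝ) := Finset.sum_le_sum fun x _ => (hC.1 x).2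
  simp only [hC.2, Finset.sum_const, Finset.card_univ, nsmul_eq_mul, mul_one] at this
  exact_mod_cast this

theorem eq_zero_of_mem_hypersimplex_zero (hC : C ∈ hypersimplex ι 0) (x : ι) : C x = 0 :=
  (Fintype.sum_eq_zero_iff_of_nonneg (fun y => (hC.1 y).1)).1 (by simpa using hC.2) |> congrFun <| x

theorem one_sub_mem_hypersimplex (hC : C ∈ hypersimplex ι D) :
    (fun x => 1 - C x) ∈ hypersimplex ι (card ι - D) := by
  refine ⟨fun x => ⟨sub_nonneg.2 (hC.1 x).2, sub_le_self 1 (hC.1 x).1⟩, ?_⟩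
  rw [Finset.sum_sub_distrib, hC.2, Nat.cast_sub (le_card_of_mem_hypersimplex hC)]
  simp

theorem comp_equiv_mem_hypersimplex [Fintype κ] (e : κ ≃ ι) (hC : C ∈ hypersimplex ι D) :
    C ∘ e ∈ hypersimplex κ D :=
  ⟨fun x => hC.1 (e x), by rw [← hC.2]; exact e.sum_comp C⟩

theorem update_comp_some_mem_hypersimplex [Fintype κ] [DecidableEq κ] {C : Option κ → ℝ}
    (hC : C ∈ hypersimplex (Option κ) D) (p : κ) (hp : C (some p) + C none ≤ 1) :
    Function.update (C ∘ some) p (C (some p) + C none) ∈ hypersimplex κ D := by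
  refine ⟨Function.forall_update_iff _ (p := fun _ c => c ∈ Set.Icc 0 1) |>.2
    ⟨⟨add_nonneg (hC.1 _).1 (hC.1 _).1, hp⟩, fun x _ => hC.1 (some x)⟩, ?_⟩
  rw [sum_update_comp_some_add, hC.2]

end Hypersimplex

def ColNormSqRealizable (ρ : Type*) [Fintype ρ] [DecidableEq ρ] {ι : Type*} [Fintype ι]
    (C : ι → ℝ) : Prop :=
  ∃ W : Matrix ρ ι ℝ, W * Wᵀ = 1 ∧ ∀ x, ∑ a, W a x * W a x = C x

section ColNormSqRealizable

variable {ι ι' κ ρ : Type*} [Fintype ι] [Fintype ρ] [DecidableEq ρ] {C : ι → ℝ}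

theorem colNormSqRealizable_of_isEmpty [IsEmpty ρ] (hC : ∀ x, C x = 0) :
    ColNormSqRealizable ρ C :=
  ⟨0, Subsingleton.elim _ _, fun x => by simp [hC x]⟩

namespace ColNormSqRealizable

theorem of_comp_equiv [Fintype ι'] (e : ι' ≃ ι) (h : ColNormSqRealizable ρ (C ∘ e)) :
    ColNormSqRealizable ρ C := by
  obtain ⟨W, hW, hWC⟩ := h
  refine ⟨W.submatrix id e.symm, ?_, fun x => by simpa using hWC (e.symm x)⟩
  rw [transpose_submatrix, submatrix_mul_equiv, hW, submatrix_id_id]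

theorem split_columns [Fintype κ] [DecidableEq κ] {C : κ → ℝ} (h : ColNormSqRealizable ρ C)
    (f : ι → κ) (c : ι → ℝ) (hc : ∀ y, ∑ x with f x = y, c x ^ 2 = 1) :
    ColNormSqRealizable ρ (fun x => c x ^ 2 * C (f x)) := by
  obtain ⟨W, hW, hWC⟩ := h
  set S : Matrix κ ι ℝ := of fun y x => if f x = y then c x else 0
  have hS : S * Sᵀ = 1 := by
    ext y y'
    by_cases hy : y = y'
    · subst hy
      simpa [S, mul_apply, Finset.sum_filter, ← sq] using hc y
    · rw [one_apply_ne hy, mul_apply]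
      refine Finset.sum_eq_zero fun x _ => ?_
      by_cases hx : f x = y <;> simp [S, hx, hy]
  refine ⟨W * S, ?_, fun x => ?_⟩
  · rw [transpose_mul, Matrix.mul_assoc, ← Matrix.mul_assoc S, hS, Matrix.one_mul, hW]
  · have hcol : ∀ a, (W * S) a x = c x * W a (f x) := by simp [S, mul_apply, mul_comm]
    simp only [hcol, ← hWC, Finset.mul_sum]
    exact Finset.sum_congr rfl fun a _ => by ring

theorem of_update_option [Fintype κ] [DecidableEq κ] {C : Option κ → ℝ}
    (h0 : ∀ x, 0 ≤ C x) (p : κ)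
    (h : ColNormSqRealizable ρ (Function.update (C ∘ some) p (C (some p) + C none))) :
    ColNormSqRealizable ρ C := by
  obtain ⟨a, b, hab, ha, hb⟩ := exists_sq_add_sq_eq_one_and_sq_mul_eq (h0 (some p)) (h0 none)
  convert h.split_columns (fun x : Option κ => x.getD p)
    (fun x : Option κ => x.elim b (Function.update 1 p a)) ?_ using 1
  · ext (_ | y)
    · simp [hb]
    · by_cases hy : y = p
      · subst hy; simp [ha]
      · simp [hy]
  · intro y
    by_cases hy : y = p
    · subst hy; simp [Finset.sum_filter, Fintype.sum_option, add_comm, hab]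
    · simp [Finset.sum_filter, Fintype.sum_option, hy, Ne.symm hy]

theorem one_sub [Fintype κ] [DecidableEq κ] (h : ColNormSqRealizable κ C)
    (hcard : card κ + card ρ = card ι) : ColNormSqRealizable ρ (fun x => 1 - C x) := by
  classical
  obtain ⟨V, hV, hVC⟩ := h
  let v : κ ⊕ ρ → EuclideanSpace ℝ ι := Sum.elim (fun k => WithLp.toLp 2 (V k)) 0
  have hv : Orthonormal ℝ ((Set.range Sum.inl).domRestrict v) := by
    let e := Equiv.ofInjective (Sum.inl : κ → κ ⊕ ρ) Sum.inl_injective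
    convert (orthonormal_toLp_rows_iff.mpr hV).comp e.symm e.symm.injective
    ext ⟨_, k, rfl⟩ : 1
    simp [v, e]
  obtain ⟨b, hb⟩ := hv.exists_orthonormalBasis_extension_of_card_eq (by simp [hcard])
  refine ⟨of fun r x => b (Sum.inr r) x, orthonormal_toLp_rows_iff.mp ?_, fun x => ?_⟩
  · exact b.orthonormal.comp _ Sum.inr_injective
  · have := b.sum_sq_inner_left (EuclideanSpace.single x 1)
    simp only [Fintype.sum_sum_type, EuclideanSpace.inner_single_left,
      hb _ (Set.mem_range_self _), v, Sum.elim_inl, conj_trivial, one_mul, PiLp.norm_single,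
      norm_one, sq] at this
    simp only [of_apply, ← hVC]
    linarith

theorem of_one_sub {D : ℕ} (hD : D ≤ card ι)
    (h : ColNormSqRealizable (Fin (card ι - D)) (fun x => 1 - C x)) :
    ColNormSqRealizable (Fin D) C := by
  simpa using h.one_sub (by simp [hD])

end ColNormSqRealizable

end ColNormSqRealizable

theorem colNormSqRealizable_of_mem_hypersimplex {ι : Type*} [Fintype ι] {D : ℕ} {C : ι → ℝ}
    (hC : C ∈ hypersimplex ι D) : ColNormSqRealizable (Fin D) C := by
  classical
  refine Finite.induction_subsingleton_or_nontrivial (P := fun ι => ∀ [Fintype ι] {D : ℕ}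
    {C : ι → ℝ}, C ∈ hypersimplex ι D → ColNormSqRealizable (Fin D) C) ι ?_ ?_ hC
  · intro ι _ _ _ D C hC
    have hD := le_card_of_mem_hypersimplex hC
    have hcard : card ι ≤ 1 := card_le_one_iff_subsingleton.2 ‹_›
    obtain rfl | hDcard : D = 0 ∨ card ι - D = 0 := by omega
    · exact colNormSqRealizable_of_isEmpty (eq_zero_of_mem_hypersimplex_zero hC)
    · have : IsEmpty (Fin (card ι - D)) := hDcard ▸ Fin.isEmpty'
      exact .of_one_sub hD <| colNormSqRealizable_of_isEmpty <|
        eq_zero_of_mem_hypersimplex_zero (hDcard ▸ one_sub_mem_hypersimplex hC)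
  · intro ι _ _ ih _ D C hC
    obtain ⟨p, q, hpq⟩ := exists_pair_ne ι
    have merge : ∀ {D : ℕ} {C : ι → ℝ}, C ∈ hypersimplex ι D → C p + C q ≤ 1 →
        ColNormSqRealizable (Fin D) C := by
      intro D C hC hpq1
      let e := Equiv.optionSubtypeNe q
      have hcard : Nat.card {x // x ≠ q} < Nat.card ι := by
        simp only [Nat.card_eq_fintype_card, card_subtype_compl, card_unique]
        have := card_pos_iff.2 ⟨p⟩
        omega
      have hCe := comp_equiv_mem_hypersimplex e hC
      exact .of_comp_equiv e <| .of_update_option (fun x => (hCe.1 x).1) ⟨p, hpq⟩ <|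
        ih _ hcard (update_comp_some_mem_hypersimplex hCe ⟨p, hpq⟩ hpq1)
    rcases le_or_gt (C p + C q) 1 with hpq1 | hpq1
    · exact merge hC hpq1
    · exact .of_one_sub (le_card_of_mem_hypersimplex hC)
        (merge (one_sub_mem_hypersimplex hC) (by linarith))

theorem sum_sq_colInner_eq_of_mul_transpose_eq_one {ι ρ : Type*} [Fintype ι] [Fintype ρ]
    [DecidableEq ρ] {W : Matrix ρ ι ℝ} (hW : W * Wᵀ = 1) (i : ι) :
    ∑ j, (∑ a, W a i * W a j) ^ 2 = ∑ a, W a i * W a i := by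
  have hP : (Wᵀ * W) * (Wᵀ * W) = Wᵀ * W := by
    rw [Matrix.mul_assoc, ← Matrix.mul_assoc W, hW, Matrix.one_mul]
  simpa [mul_apply, sq, mul_comm] using congrFun (congrFun hP i) i

theorem capacity_eq_of_mul_transpose_eq_one {D N : ℕ} {W : Matrix (Fin D) (Fin N) ℝ}
    (hW : W * Wᵀ = 1) (i : Fin N) : capacity W i = ∑ a, W a i * W a i := by
  rw [capacity, sum_sq_colInner_eq_of_mul_transpose_eq_one hW, sq, mul_self_div_self]

theorem exists_semiorthogonal_of_capacities_general
    {D N : ℕ} (C : Fin N → ℝ) (hC0 : ∀ i, 0 ≤ C i) (hC1 : ∀ i, C i ≤ 1)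
    (hsum : ∑ i, C i = (D : ℝ)) :
    ∃ W : Matrix (Fin D) (Fin N) ℝ, W * Wᵀ = 1 ∧
      (∀ i, ∑ a, W a i * W a i = C i) ∧ (∀ i, capacity W i = C i) := by
  obtain ⟨W, hW, hWC⟩ :=
    colNormSqRealizable_of_mem_hypersimplex (C := C) ⟨fun i => ⟨hC0 i, hC1 i⟩, hsum⟩
  exact ⟨W, hW, hWC, fun i => (capacity_eq_of_mul_transpose_eq_one hW i).trans (hWC i)⟩

/-- For positive integers `D ≤ N` and reals `0 ≤ C_i ≤ 1` with
`∑ i, C_i = D`, there is a `D × N` semiorthogonal matrix `W` (`W Wᵀ = I`) whose `i`-th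
column `w_i` satisfies `‖w_i‖² = C_i`; in particular `C_i(W) = C_i` for all `i`. -/
theorem exists_semiorthogonal_of_capacities
    {D N : ℕ} (hDpos : 0 < D) (hNpos : 0 < N) (hDN : D ≤ N)
    (C : Fin N → ℝ) (hC0 : ∀ i, 0 ≤ C i) (hC1 : ∀ i, C i ≤ 1)
    (hsum : ∑ i, C i = (D : ℝ)) :
    ∃ W : Matrix (Fin D) (Fin N) ℝ, W * Wᵀ = 1 ∧
      (∀ i, ∑ a, W a i * W a i = C i) ∧ (∀ i, capacity W i = C i) :=
  exists_semiorthogonal_of_capacities_general C hC0 hC1 hsum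
end

section
/- If the tuple (C_1,…,C_N) is feasible for dimension D, and C'_N, C'_{N+1} ≥ 0 are real numbers with C'_N + C'_{N+1} = C_N, then the tuple (C_1,…,C_{N−1}, C'_N, C'_{N+1}) of length N+1 is feasible for dimension D. -/
open scoped BigOperators
open Matrix

/-- A tuple `(C_1, …, C_N)` is *feasible* for dimension `D` if there is an `N × N`
orthogonal matrix `U` such that the `i`-th column of the matrix formed by the first `D`
rows of `U` has norm-squared `C_i`. -/
def Feasible (D : ℕ) {N : ℕ} (C : Fin N → ℝ) : Prop :=
  ∃ U : Matrix (Fin N) (Fin N) ℝ, U * Uᵀ = 1 ∧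
    ∀ i, (∑ a : Fin N, if (a : ℕ) < D then U a i ^ 2 else 0) = C i

/-- Existence of splitting coefficients. -/
lemma exists_alpha_beta (a b : ℝ) (ha : 0 ≤ a) (hb : 0 ≤ b) :
    ∃ α β : ℝ, α ^ 2 + β ^ 2 = 1 ∧ α ^ 2 * (a + b) = a ∧ β ^ 2 * (a + b) = b := by
  rcases eq_or_lt_of_le (by linarith : (0:ℝ) ≤ a + b) with h | h
  · exact ⟨1, 0, by norm_num, by nlinarith, by nlinarith⟩
  · refine ⟨Real.sqrt (a / (a + b)), Real.sqrt (b / (a + b)), ?_, ?_, ?_⟩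
    · rw [Real.sq_sqrt (by positivity), Real.sq_sqrt (by positivity)]
      field_simp
    · rw [Real.sq_sqrt (by positivity)]; field_simp
    · rw [Real.sq_sqrt (by positivity)]; field_simp

/-- Top part of the columns of the new matrix. -/
def wdef {N : ℕ} (U : Matrix (Fin (N + 1)) (Fin (N + 1)) ℝ) (α β : ℝ)
    (c : Fin (N + 2)) (r : Fin (N + 1)) : ℝ :=
  if h : (c : ℕ) < N then U r ⟨(c : ℕ), by omega⟩
  else if (c : ℕ) = N then α * U r (Fin.last N) else β * U r (Fin.last N)

/-- Bottom row of the new matrix. -/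
def zdef {N : ℕ} (α β : ℝ) (c : Fin (N + 2)) : ℝ :=
  if (c : ℕ) = N then β else if (c : ℕ) = N + 1 then -α else 0

/-- The new matrix. -/
def Vdef {N : ℕ} (U : Matrix (Fin (N + 1)) (Fin (N + 1)) ℝ) (α β : ℝ) :
    Matrix (Fin (N + 2)) (Fin (N + 2)) ℝ :=
  fun r c => if h : (r : ℕ) < N + 1 then wdef U α β c ⟨(r : ℕ), h⟩ else zdef α β c

lemma Vdef_castSucc {N : ℕ} (U : Matrix (Fin (N + 1)) (Fin (N + 1)) ℝ) (α β : ℝ)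
    (r : Fin (N + 1)) (c : Fin (N + 2)) :
    Vdef U α β r.castSucc c = wdef U α β c r := by
  simp [Vdef, r.isLt]

lemma Vdef_last {N : ℕ} (U : Matrix (Fin (N + 1)) (Fin (N + 1)) ℝ) (α β : ℝ)
    (c : Fin (N + 2)) : Vdef U α β (Fin.last (N + 1)) c = zdef α β c := by
  simp [Vdef]

/-- If `(C_1, …, C_N)` (here of length `N + 1`) is feasible for dimension
`D` and `a, b ≥ 0` split its last entry (`a + b = C_N`), then the tuple
`(C_1, …, C_{N-1}, a, b)` of length `N + 2` is feasible for dimension `D`. -/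
theorem feasible_split_last {D N : ℕ} (hDN : D ≤ N + 1) (C : Fin (N + 1) → ℝ)
    (h : Feasible D C) (a b : ℝ) (ha : 0 ≤ a) (hb : 0 ≤ b)
    (hab : a + b = C (Fin.last N)) :
    Feasible D (Fin.snoc (Function.update C (Fin.last N) a) b) := by
  obtain ⟨U, hU, hC⟩ := h
  obtain ⟨α, β, hαβ, hαa, hβb⟩ := exists_alpha_beta a b ha hb
  have hUo : Uᵀ * U = 1 := mul_eq_one_comm.mp hU
  have hcol : ∀ i j, (∑ r, U r i * U r j) = if i = j then 1 else 0 := by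
    intro i j
    have := congrFun (congrFun hUo i) j
    simpa [Matrix.mul_apply, Matrix.transpose_apply, Matrix.one_apply] using this
  have hll : (∑ r, U r (Fin.last N) * U r (Fin.last N)) = 1 := by simp [hcol]
  refine ⟨Vdef U α β, ?_, ?_⟩
  · rw [mul_eq_one_comm]
    ext c c'
    rw [Matrix.mul_apply, Matrix.one_apply]
    have hsplit : (∑ r, (Vdef U α β)ᵀ c r * Vdef U α β r c')
        = (∑ r : Fin (N + 1), wdef U α β c r * wdef U α β c' r)
          + zdef α β c * zdef α β c' := by
      rw [Fin.sum_univ_castSucc]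
      simp only [Matrix.transpose_apply, Vdef_castSucc, Vdef_last]
    rw [hsplit]
    rcases Nat.lt_trichotomy (c : ℕ) N with hc | hc | hc
    · rcases Nat.lt_trichotomy (c' : ℕ) N with hc' | hc' | hc'
      · -- both small
        have h1 : (∑ r : Fin (N + 1), wdef U α β c r * wdef U α β c' r)
            = if (⟨(c : ℕ), by omega⟩ : Fin (N + 1)) = ⟨(c' : ℕ), by omega⟩ then 1 else 0 := by
          simp only [wdef, dif_pos hc, dif_pos hc']
          exact hcol _ _
        have h2 : (c = c') ↔ ((⟨(c : ℕ), by omega⟩ : Fin (N + 1)) = ⟨(c' : ℕ), by omega⟩) := by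
          constructor <;> intro hh
          · simp [hh]
          · exact Fin.ext (by simpa using congrArg Fin.val hh)
        rw [h1]
        simp only [zdef, if_neg (by omega : ¬ (c : ℕ) = N), mul_zero,
          if_neg (by omega : ¬ (c : ℕ) = N + 1), zero_mul, add_zero]
        by_cases hcc : c = c'
        · rw [if_pos hcc, if_pos (h2.mp hcc)]
        · rw [if_neg hcc, if_neg (fun hh => hcc (h2.mpr hh))]
      · -- c small, c' = N
        have h1 : (∑ r : Fin (N + 1), wdef U α β c r * wdef U α β c' r)
            = α * (if (⟨(c : ℕ), by omega⟩ : Fin (N + 1)) = Fin.last N then 1 else 0) := by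
          simp only [wdef, dif_pos hc, dif_neg (by omega : ¬ (c' : ℕ) < N), if_pos hc']
          rw [← hcol]
          rw [Finset.mul_sum]
          exact Finset.sum_congr rfl fun r _ => by ring
        rw [h1, if_neg (by intro hh; have := congrArg Fin.val hh; simp [Fin.last] at this; omega)]
        simp only [zdef, if_neg (by omega : ¬ (c : ℕ) = N),
          if_neg (by omega : ¬ (c : ℕ) = N + 1), zero_mul, add_zero, mul_zero]
        rw [if_neg (by intro hh; rw [hh] at hc; omega)]
      · -- c small, c' = N+1
        have hc'' : (c' : ℕ) = N + 1 := by omega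
        have h1 : (∑ r : Fin (N + 1), wdef U α β c r * wdef U α β c' r)
            = β * (if (⟨(c : ℕ), by omega⟩ : Fin (N + 1)) = Fin.last N then 1 else 0) := by
          simp only [wdef, dif_pos hc, dif_neg (by omega : ¬ (c' : ℕ) < N),
            if_neg (by omega : ¬ (c' : ℕ) = N)]
          rw [← hcol]
          rw [Finset.mul_sum]
          exact Finset.sum_congr rfl fun r _ => by ring
        rw [h1, if_neg (by intro hh; have := congrArg Fin.val hh; simp [Fin.last] at this; omega)]
        simp only [zdef, if_neg (by omega : ¬ (c : ℕ) = N),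
          if_neg (by omega : ¬ (c : ℕ) = N + 1), zero_mul, add_zero, mul_zero]
        rw [if_neg (by intro hh; rw [hh] at hc; omega)]
    · rcases Nat.lt_trichotomy (c' : ℕ) N with hc' | hc' | hc'
      · -- c = N, c' small
        have h1 : (∑ r : Fin (N + 1), wdef U α β c r * wdef U α β c' r)
            = α * (if Fin.last N = (⟨(c' : ℕ), by omega⟩ : Fin (N + 1)) then 1 else 0) := by
          simp only [wdef, dif_pos hc', dif_neg (by omega : ¬ (c : ℕ) < N), if_pos hc]
          rw [← hcol]
          rw [Finset.mul_sum]
          exact Finset.sum_congr rfl fun r _ => by ring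
        rw [h1, if_neg (by intro hh; have := congrArg Fin.val hh; simp [Fin.last] at this; omega)]
        simp only [zdef, if_neg (by omega : ¬ (c' : ℕ) = N),
          if_neg (by omega : ¬ (c' : ℕ) = N + 1), mul_zero, add_zero]
        rw [if_neg (by intro hh; rw [← hh] at hc'; omega)]
      · -- c = N, c' = N
        have h1 : (∑ r : Fin (N + 1), wdef U α β c r * wdef U α β c' r)
            = α * α := by
          simp only [wdef, dif_neg (by omega : ¬ (c : ℕ) < N), if_pos hc,
            dif_neg (by omega : ¬ (c' : ℕ) < N), if_pos hc']
          have e : α * α = α * α * (∑ r, U r (Fin.last N) * U r (Fin.last N)) := by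
            rw [hll, mul_one]
          rw [e, Finset.mul_sum]
          exact Finset.sum_congr rfl fun r _ => by ring
        rw [h1]
        simp only [zdef, if_pos hc, if_pos hc']
        rw [if_pos (Fin.ext (by omega))]
        nlinarith [hαβ]
      · -- c = N, c' = N+1
        have hc'' : (c' : ℕ) = N + 1 := by omega
        have h1 : (∑ r : Fin (N + 1), wdef U α β c r * wdef U α β c' r)
            = α * β := by
          simp only [wdef, dif_neg (by omega : ¬ (c : ℕ) < N), if_pos hc,
            dif_neg (by omega : ¬ (c' : ℕ) < N), if_neg (by omega : ¬ (c' : ℕ) = N)]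
          have e : α * β = α * β * (∑ r, U r (Fin.last N) * U r (Fin.last N)) := by
            rw [hll, mul_one]
          rw [e, Finset.mul_sum]
          exact Finset.sum_congr rfl fun r _ => by ring
        rw [h1]
        simp only [zdef, if_pos hc, if_neg (by omega : ¬ (c' : ℕ) = N), if_pos hc'']
        rw [if_neg (by intro hh; have := congrArg Fin.val hh; omega)]
        ring
    · -- c = N+1
      have hcv : (c : ℕ) = N + 1 := by omega
      rcases Nat.lt_trichotomy (c' : ℕ) N with hc' | hc' | hc'
      · have h1 : (∑ r : Fin (N + 1), wdef U α β c r * wdef U α β c' r)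
            = β * (if Fin.last N = (⟨(c' : ℕ), by omega⟩ : Fin (N + 1)) then 1 else 0) := by
          simp only [wdef, dif_pos hc', dif_neg (by omega : ¬ (c : ℕ) < N),
            if_neg (by omega : ¬ (c : ℕ) = N)]
          rw [← hcol]
          rw [Finset.mul_sum]
          exact Finset.sum_congr rfl fun r _ => by ring
        rw [h1, if_neg (by intro hh; have := congrArg Fin.val hh; simp [Fin.last] at this; omega)]
        simp only [zdef, if_neg (by omega : ¬ (c' : ℕ) = N),
          if_neg (by omega : ¬ (c' : ℕ) = N + 1), mul_zero, add_zero]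
        rw [if_neg (by intro hh; rw [← hh] at hc'; omega)]
      · -- c = N+1, c' = N
        have h1 : (∑ r : Fin (N + 1), wdef U α β c r * wdef U α β c' r)
            = β * α := by
          simp only [wdef, dif_neg (by omega : ¬ (c : ℕ) < N),
            if_neg (by omega : ¬ (c : ℕ) = N),
            dif_neg (by omega : ¬ (c' : ℕ) < N), if_pos hc']
          have e : β * α = β * α * (∑ r, U r (Fin.last N) * U r (Fin.last N)) := by
            rw [hll, mul_one]
          rw [e, Finset.mul_sum]
          exact Finset.sum_congr rfl fun r _ => by ring
        rw [h1]
        simp only [zdef, if_pos hc', if_neg (by omega : ¬ (c : ℕ) = N), if_pos hcv]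
        rw [if_neg (by intro hh; have := congrArg Fin.val hh; omega)]
        ring
      · -- c = N+1, c' = N+1
        have hc'' : (c' : ℕ) = N + 1 := by omega
        have h1 : (∑ r : Fin (N + 1), wdef U α β c r * wdef U α β c' r)
            = β * β := by
          simp only [wdef, dif_neg (by omega : ¬ (c : ℕ) < N),
            if_neg (by omega : ¬ (c : ℕ) = N),
            dif_neg (by omega : ¬ (c' : ℕ) < N), if_neg (by omega : ¬ (c' : ℕ) = N)]
          have e : β * β = β * β * (∑ r, U r (Fin.last N) * U r (Fin.last N)) := by
            rw [hll, mul_one]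
          rw [e, Finset.mul_sum]
          exact Finset.sum_congr rfl fun r _ => by ring
        rw [h1]
        simp only [zdef, if_neg (by omega : ¬ (c : ℕ) = N), if_pos hcv,
          if_neg (by omega : ¬ (c' : ℕ) = N), if_pos hc'']
        rw [if_pos (Fin.ext (by omega))]
        nlinarith [hαβ]
  · intro i
    have hsplit : (∑ r : Fin (N + 2), if (r : ℕ) < D then Vdef U α β r i ^ 2 else 0)
        = ∑ r : Fin (N + 1), if (r : ℕ) < D then wdef U α β i r ^ 2 else 0 := by
      rw [Fin.sum_univ_castSucc]
      simp only [Vdef_castSucc, Vdef_last, Fin.coe_castSucc, Fin.val_last]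
      rw [if_neg (by omega : ¬ N + 1 < D), add_zero]
    rw [hsplit]
    rcases Nat.lt_trichotomy (i : ℕ) N with hi | hi | hi
    · -- i small
      have h1 : (∑ r : Fin (N + 1), if (r : ℕ) < D then wdef U α β i r ^ 2 else 0)
          = C ⟨(i : ℕ), by omega⟩ := by
        simp only [wdef, dif_pos hi]
        exact hC _
      rw [h1]
      have : i = Fin.castSucc (⟨(i : ℕ), by omega⟩ : Fin (N + 1)) := Fin.ext (by simp)
      conv_rhs => rw [this]
      rw [Fin.snoc_castSucc, Function.update_of_ne]
      intro hh
      have := congrArg Fin.val hh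
      simp [Fin.last] at this
      omega
    · -- i = N
      have h1 : (∑ r : Fin (N + 1), if (r : ℕ) < D then wdef U α β i r ^ 2 else 0)
          = α ^ 2 * C (Fin.last N) := by
        simp only [wdef, dif_neg (by omega : ¬ (i : ℕ) < N), if_pos hi]
        rw [← hC (Fin.last N), Finset.mul_sum]
        exact Finset.sum_congr rfl fun r _ => by split <;> ring
      rw [h1, ← hab]
      have : i = Fin.castSucc (Fin.last N) := Fin.ext (by simp [hi])
      rw [this, Fin.snoc_castSucc, Function.update_self]
      exact hαa
    · -- i = N+1
      have hiv : (i : ℕ) = N + 1 := by omega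
      have h1 : (∑ r : Fin (N + 1), if (r : ℕ) < D then wdef U α β i r ^ 2 else 0)
          = β ^ 2 * C (Fin.last N) := by
        simp only [wdef, dif_neg (by omega : ¬ (i : ℕ) < N),
          if_neg (by omega : ¬ (i : ℕ) = N)]
        rw [← hC (Fin.last N), Finset.mul_sum]
        exact Finset.sum_congr rfl fun r _ => by split <;> ring
      rw [h1, ← hab]
      have : i = Fin.last (N + 1) := Fin.ext (by simp [hiv])
      rw [this, Fin.snoc_last]
      exact hβb
end

section
/- Let x_1,…,x_N be independent real random variables with E[x_i] = 0, E[x_i²] = 1, and E[x_i⁴] = k for all i (with k finite). Let v_1,…,v_N ∈ ℝ, let W be a real D×N matrix with columns w_1,…,w_N, and set y = Σ_i v_i x_i², ỹ = Σ_{a=1}^D ((W x)_a)² + b with b = −Σ_i (‖w_i‖² − v_i). Then E[(ỹ − y)²] = (k−1)·Σ_i (‖w_i‖² − v_i)² + 2·Σ_{i≠j} (w_i·w_j)². -/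
open scoped BigOperators ENNReal
open MeasureTheory ProbabilityTheory Matrix

/-!
Put `G = WᵀW - diag v`. The residual `ỹ - y` is the quadratic form `xᵀGx` minus its mean `tr G`,
so the expected loss is `Var[xᵀGx] = ∑ Gᵢⱼ Gᵣₛ cov[xᵢxⱼ, xᵣxₛ]`. A product `xᵢxⱼxᵣxₛ` in which
some index occurs only once has mean zero by independence and centring; the remaining index
patterns give `cov[xᵢxⱼ, xᵣxₛ] = δᵢᵣδⱼₛ + δᵢₛδⱼᵣ + (E[xᵢ⁴] - 3) δᵢⱼδⱼᵣδᵣₛ`, and summing this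
against the symmetric matrix `G` gives the formula.
-/

instance ENNReal.HolderTriple.instFourFourTwo : ENNReal.HolderTriple 4 4 2 := ⟨by
  rw [← two_mul, show (4 : ℝ≥0∞) = 2 * 2 by norm_num, ENNReal.mul_inv (by simp) (by simp),
    ← mul_assoc, ENNReal.mul_inv_cancel (by simp) (by simp), one_mul]⟩

theorem Matrix.sum_sq_sum_mul_eq {κ ι R : Type*} [Fintype κ] [Fintype ι] [CommSemiring R]
    (W : Matrix κ ι R) (x : ι → R) :
    ∑ a, (∑ i, W a i * x i) ^ 2 = ∑ i, ∑ j, (Wᵀ * W) i j * (x i * x j) := by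
  simp only [sq, Finset.sum_mul_sum]
  simp only [Matrix.mul_apply, Matrix.transpose_apply, Finset.sum_mul]
  rw [Finset.sum_comm]
  refine Finset.sum_congr rfl fun i _ => ?_
  rw [Finset.sum_comm]
  exact Finset.sum_congr rfl fun j _ => Finset.sum_congr rfl fun a _ => by ring

namespace ProbabilityTheory.iIndepFun

variable {Ω ι : Type*} [MeasurableSpace Ω] {μ : Measure Ω} {X : ι → Ω → ℝ}

theorem integral_mul_mul_mul_mul_eq_zero (hX : iIndepFun X μ) (hXm : ∀ i, AEMeasurable (X i) μ)
    (h1 : ∀ i, ∫ ω, X i ω ∂μ = 0) {a b c t : ι} (hat : a ≠ t) (hbt : b ≠ t) (hct : c ≠ t) :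
    ∫ ω, X a ω * X b ω * X c ω * X t ω ∂μ = 0 := by
  classical
  have hφ : Measurable fun y : ({a, b, c} : Finset ι) → ℝ =>
      y ⟨a, by simp⟩ * y ⟨b, by simp⟩ * y ⟨c, by simp⟩ := by fun_prop
  have hψ : Measurable fun y : ({t} : Finset ι) → ℝ => y ⟨t, by simp⟩ := measurable_pi_apply _
  have hind := (hX.indepFun_finset₀ {a, b, c} {t} (by simp [hat.symm, hbt.symm, hct.symm]) hXm).comp
    hφ hψ
  refine (hind.integral_fun_mul_eq_mul_integral
    (((hXm a).mul (hXm b)).mul (hXm c)).aestronglyMeasurable (hXm t).aestronglyMeasurable).trans ?_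
  simp [h1]

theorem integral_mul_eq_ite [DecidableEq ι] (hX : iIndepFun X μ) (hXm : ∀ i, AEMeasurable (X i) μ)
    (h1 : ∀ i, ∫ ω, X i ω ∂μ = 0) (h2 : ∀ i, ∫ ω, X i ω ^ 2 ∂μ = 1) (i j : ι) :
    ∫ ω, X i ω * X j ω ∂μ = if i = j then 1 else 0 := by
  split_ifs with hij
  · subst hij
    simp only [← sq, h2]
  · rw [(hX.indepFun hij).integral_fun_mul_eq_mul_integral (hXm i).aestronglyMeasurable
      (hXm j).aestronglyMeasurable]
    simp [h1]

theorem integral_sq_mul_sq (hX : iIndepFun X μ) (hXm : ∀ i, AEMeasurable (X i) μ)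
    (h2 : ∀ i, ∫ ω, X i ω ^ 2 ∂μ = 1) {i j : ι} (hij : i ≠ j) :
    ∫ ω, X i ω ^ 2 * X j ω ^ 2 ∂μ = 1 := by
  have hind := (hX.indepFun hij).comp (measurable_id.pow_const 2) (measurable_id.pow_const 2)
  simpa [h2] using hind.integral_fun_mul_eq_mul_integral ((hXm i).pow_const 2).aestronglyMeasurable
    ((hXm j).pow_const 2).aestronglyMeasurable

theorem integral_mul_mul_mul_mul [DecidableEq ι] (hX : iIndepFun X μ)
    (hXm : ∀ i, AEMeasurable (X i) μ) (h1 : ∀ i, ∫ ω, X i ω ∂μ = 0)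
    (h2 : ∀ i, ∫ ω, X i ω ^ 2 ∂μ = 1) (i j r s : ι) :
    ∫ ω, X i ω * X j ω * X r ω * X s ω ∂μ =
      (if i = j ∧ r = s then 1 else 0) + (if i = r ∧ j = s then 1 else 0) +
        (if i = s ∧ j = r then 1 else 0) +
          if i = j ∧ j = r ∧ r = s then ∫ ω, X i ω ^ 4 ∂μ - 3 else 0 := by
  have isolated {a b c t : ι} (ha : a ≠ t) (hb : b ≠ t) (hc : c ≠ t) :=
    hX.integral_mul_mul_mul_mul_eq_zero hXm h1 ha hb hc
  by_cases hi : i ≠ j ∧ i ≠ r ∧ i ≠ s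
  · rw [show (fun ω => X i ω * X j ω * X r ω * X s ω) = fun ω => X j ω * X r ω * X s ω * X i ω by
      ext; ring, isolated hi.1.symm hi.2.1.symm hi.2.2.symm]
    simp [hi]
  by_cases hj : i ≠ j ∧ j ≠ r ∧ j ≠ s
  · rw [show (fun ω => X i ω * X j ω * X r ω * X s ω) = fun ω => X i ω * X r ω * X s ω * X j ω by
      ext; ring, isolated hj.1 hj.2.1.symm hj.2.2.symm]
    simp [hj]
  by_cases hr : i ≠ r ∧ j ≠ r ∧ r ≠ s
  · rw [show (fun ω => X i ω * X j ω * X r ω * X s ω) = fun ω => X i ω * X j ω * X s ω * X r ω by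
      ext; ring, isolated hr.1 hr.2.1 hr.2.2.symm]
    simp [hr]
  by_cases hs : i ≠ s ∧ j ≠ s ∧ r ≠ s
  · rw [isolated hs.1 hs.2.1 hs.2.2]
    simp [hs]
  -- no index occurs exactly once, so the indices pair up
  rcases eq_or_ne i j with rfl | hij
  · obtain rfl : r = s := by grind
    rcases eq_or_ne i r with rfl | hir
    · simp only [and_self, if_true]
      rw [show (fun ω => X i ω * X i ω * X i ω * X i ω) = fun ω => X i ω ^ 4 by ext; ring]
      ring
    · rw [show (fun ω => X i ω * X i ω * X r ω * X r ω) = fun ω => X i ω ^ 2 * X r ω ^ 2 by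
        ext; ring, hX.integral_sq_mul_sq hXm h2 hir]
      simp [hir]
  · obtain ⟨rfl, rfl⟩ | ⟨rfl, rfl⟩ : (r = i ∧ s = j) ∨ (r = j ∧ s = i) := by grind
    · rw [show (fun ω => X r ω * X s ω * X r ω * X s ω) = fun ω => X r ω ^ 2 * X s ω ^ 2 by
        ext; ring, hX.integral_sq_mul_sq hXm h2 hij]
      simp [hij]
    · rw [show (fun ω => X s ω * X r ω * X r ω * X s ω) = fun ω => X s ω ^ 2 * X r ω ^ 2 by
        ext; ring, hX.integral_sq_mul_sq hXm h2 hij]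
      simp [hij, hij.symm]

variable [IsProbabilityMeasure μ]

theorem covariance_mul_mul [DecidableEq ι] (hX : iIndepFun X μ) (hL4 : ∀ i, MemLp (X i) 4 μ)
    (h1 : ∀ i, ∫ ω, X i ω ∂μ = 0) (h2 : ∀ i, ∫ ω, X i ω ^ 2 ∂μ = 1) (i j r s : ι) :
    cov[fun ω => X i ω * X j ω, fun ω => X r ω * X s ω; μ] =
      (if i = r ∧ j = s then 1 else 0) + (if i = s ∧ j = r then 1 else 0) +
        if i = j ∧ j = r ∧ r = s then ∫ ω, X i ω ^ 4 ∂μ - 3 else 0 := by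
  have hXm i := (hL4 i).aestronglyMeasurable.aemeasurable
  rw [covariance_eq_sub ((hL4 j).mul' (hL4 i)) ((hL4 s).mul' (hL4 r))]
  simp only [Pi.mul_apply, ← mul_assoc, hX.integral_mul_mul_mul_mul hXm h1 h2,
    hX.integral_mul_eq_ite hXm h1 h2, ite_zero_mul_ite_zero, mul_one]
  ring

theorem variance_quadratic_form [Fintype ι] [DecidableEq ι] (hX : iIndepFun X μ)
    (hL4 : ∀ i, MemLp (X i) 4 μ) (h1 : ∀ i, ∫ ω, X i ω ∂μ = 0) (h2 : ∀ i, ∫ ω, X i ω ^ 2 ∂μ = 1)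
    (A : Matrix ι ι ℝ) :
    Var[fun ω => ∑ i, ∑ j, A i j * (X i ω * X j ω); μ] =
      ∑ i, ∑ j, A i j * (A i j + A j i) + ∑ i, (∫ ω, X i ω ^ 4 ∂μ - 3) * A i i ^ 2 := by
  have hL2 i j : MemLp (fun ω => A i j * (X i ω * X j ω)) 2 μ :=
    ((hL4 j).mul' (hL4 i)).const_mul _
  rw [variance_fun_sum fun i => memLp_finsetSum _ fun j _ => hL2 i j]
  simp only [covariance_fun_sum_fun_sum (hL2 _) (hL2 _), covariance_const_mul_left,
    covariance_const_mul_right, hX.covariance_mul_mul hL4 h1 h2]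
  simp only [ite_and, mul_add, mul_ite, mul_one, mul_zero, mul_comm, Finset.sum_add_distrib,
    Finset.sum_ite_irrel, Finset.sum_ite_eq, Finset.mem_univ, ↓reduceIte, Finset.sum_const_zero,
    Finset.sum_ite_eq', sq, add_right_inj]
  exact Finset.sum_congr rfl fun i _ => by ring

theorem integral_quadratic_form [Fintype ι] [DecidableEq ι] (hX : iIndepFun X μ)
    (hL4 : ∀ i, MemLp (X i) 4 μ) (h1 : ∀ i, ∫ ω, X i ω ∂μ = 0) (h2 : ∀ i, ∫ ω, X i ω ^ 2 ∂μ = 1)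
    (A : Matrix ι ι ℝ) :
    ∫ ω, ∑ i, ∑ j, A i j * (X i ω * X j ω) ∂μ = A.trace := by
  have hint i j : Integrable (fun ω => A i j * (X i ω * X j ω)) μ :=
    (((hL4 j).mul' (hL4 i)).integrable one_le_two).const_mul _
  have hXm i := (hL4 i).aestronglyMeasurable.aemeasurable
  rw [integral_finsetSum _ fun i _ => integrable_finsetSum _ fun j _ => hint i j]
  simp [integral_finsetSum _ fun j _ => hint _ j, integral_const_mul,
    hX.integral_mul_eq_ite hXm h1 h2, Matrix.trace]

theorem integral_quadratic_form_sub_trace_sq [Fintype ι] [DecidableEq ι] (hX : iIndepFun X μ)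
    (hL4 : ∀ i, MemLp (X i) 4 μ) (h1 : ∀ i, ∫ ω, X i ω ∂μ = 0) (h2 : ∀ i, ∫ ω, X i ω ^ 2 ∂μ = 1)
    {A : Matrix ι ι ℝ} (hA : A.IsSymm) :
    ∫ ω, (∑ i, ∑ j, A i j * (X i ω * X j ω) - A.trace) ^ 2 ∂μ =
      ∑ i, (∫ ω, X i ω ^ 4 ∂μ - 1) * A i i ^ 2 + 2 * ∑ i, ∑ j ∈ Finset.univ.erase i, A i j ^ 2 := by
  have hQm : AEMeasurable (fun ω => ∑ i, ∑ j, A i j * (X i ω * X j ω)) μ := by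
    have hXm i := (hL4 i).aestronglyMeasurable.aemeasurable
    fun_prop
  rw [← hX.integral_quadratic_form hL4 h1 h2, ← variance_eq_integral hQm,
    hX.variance_quadratic_form hL4 h1 h2]
  have hrow i : ∑ j, A i j * (A i j + A j i) =
      2 * A i i ^ 2 + 2 * ∑ j ∈ Finset.univ.erase i, A i j ^ 2 := by
    have hterm j : A i j * (A i j + A j i) = 2 * A i j ^ 2 := by rw [hA.apply i j]; ring
    rw [Finset.sum_congr rfl fun j _ => hterm j, ← Finset.mul_sum,
      ← Finset.add_sum_erase _ _ (Finset.mem_univ i)]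
    ring
  rw [Finset.mul_sum, ← Finset.sum_add_distrib, ← Finset.sum_add_distrib]
  exact Finset.sum_congr rfl fun i _ => by rw [hrow i]; ring

end ProbabilityTheory.iIndepFun

theorem quadratic_model_expected_loss_general
    {Ω : Type*} [MeasurableSpace Ω] (μ : Measure Ω) [IsProbabilityMeasure μ]
    {N D : ℕ} (X : Fin N → Ω → ℝ)
    (hindep : iIndepFun X μ)
    (hL4 : ∀ i, MemLp (X i) 4 μ)
    (h1 : ∀ i, ∫ ω, X i ω ∂μ = 0)
    (h2 : ∀ i, ∫ ω, (X i ω) ^ 2 ∂μ = 1)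
    (k : ℝ) (h4 : ∀ i, ∫ ω, (X i ω) ^ 4 ∂μ = k)
    (v : Fin N → ℝ) (W : Matrix (Fin D) (Fin N) ℝ)
    (b : ℝ) (hb : b = -∑ i, ((∑ a, W a i * W a i) - v i)) :
    ∫ ω, ((∑ a, (∑ i, W a i * X i ω) ^ 2 + b) - ∑ i, v i * (X i ω) ^ 2) ^ 2 ∂μ =
      (k - 1) * ∑ i, ((∑ a, W a i * W a i) - v i) ^ 2 +
        2 * ∑ i, ∑ j ∈ Finset.univ.erase i, (∑ a, W a i * W a j) ^ 2 := by
  obtain ⟨G, hG⟩ : ∃ G : Matrix (Fin N) (Fin N) ℝ, G = Wᵀ * W - diagonal v := ⟨_, rfl⟩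
  have hresidual ω : (∑ a, (∑ i, W a i * X i ω) ^ 2 + b) - ∑ i, v i * X i ω ^ 2 =
      ∑ i, ∑ j, G i j * (X i ω * X j ω) - G.trace := by
    rw [Matrix.sum_sq_sum_mul_eq, hb]
    simp [hG, sub_mul, Finset.sum_sub_distrib, Matrix.trace, diagonal_apply, Matrix.mul_apply, sq]
    ring
  have hdiag i : G i i = ∑ a, W a i * W a i - v i := by simp [hG, Matrix.mul_apply]
  have hoff i j (hj : j ∈ Finset.univ.erase i) : G i j = ∑ a, W a i * W a j := by
    simp [hG, Matrix.mul_apply, (Finset.ne_of_mem_erase hj).symm]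
  simp_rw [hresidual]
  rw [hindep.integral_quadratic_form_sub_trace_sq hL4 h1 h2
    (by simp [hG, IsSymm, transpose_mul])]
  simp only [h4, hdiag, ← Finset.mul_sum]
  congr 2
  exact Finset.sum_congr rfl fun i _ => Finset.sum_congr rfl fun j hj => by rw [hoff i j hj]

/-- For the quadratic toy model with ground truth `y = ∑ᵢ vᵢ xᵢ²` and model
`ỹ = ∑ₐ ((Wx)ₐ)² + b` with optimal bias `b = -∑ᵢ (‖wᵢ‖² - vᵢ)`, the expected loss is
`E[(ỹ - y)²] = (k-1) ∑ᵢ (‖wᵢ‖² - vᵢ)² + 2 ∑_{i≠j} (wᵢ·wⱼ)²`. -/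
theorem quadratic_model_expected_loss
    {Ω : Type*} [MeasurableSpace Ω] (μ : Measure Ω) [IsProbabilityMeasure μ]
    {N D : ℕ} (X : Fin N → Ω → ℝ) (hmeas : ∀ i, Measurable (X i))
    (hindep : iIndepFun X μ)
    (hL4 : ∀ i, MemLp (X i) 4 μ)
    (h1 : ∀ i, ∫ ω, X i ω ∂μ = 0)
    (h2 : ∀ i, ∫ ω, (X i ω) ^ 2 ∂μ = 1)
    (k : ℝ) (h4 : ∀ i, ∫ ω, (X i ω) ^ 4 ∂μ = k)
    (v : Fin N → ℝ) (W : Matrix (Fin D) (Fin N) ℝ)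
    (b : ℝ) (hb : b = -∑ i, ((∑ a, W a i * W a i) - v i)) :
    ∫ ω, ((∑ a, (∑ i, W a i * X i ω) ^ 2 + b) - ∑ i, v i * (X i ω) ^ 2) ^ 2 ∂μ =
      (k - 1) * ∑ i, ((∑ a, W a i * W a i) - v i) ^ 2 +
        2 * ∑ i, ∑ j ∈ Finset.univ.erase i, (∑ a, W a i * W a j) ^ 2 :=
  quadratic_model_expected_loss_general μ X hindep hL4 h1 h2 k h4 v W b hb
end

section
/- Let X_1,…,X_N be real random variables with E[X_i] = 0 and Cov(X_i, X_j) = δ_ij for all i, j, and let W be a real D×N matrix with columns w_1,…,w_N. Fix i with w_i ≠ 0. Then the squared Pearson correlation coefficient between X_i and the i-th component of W^T W X equals C_i(W), i.e., Cov(X_i, (W^T W X)_i)² / (Var(X_i) · Var((W^T W X)_i)) = C_i(W). -/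
open scoped BigOperators
open MeasureTheory ProbabilityTheory Matrix

/-- The covariance of two real random variables: `Cov(f,g) = E[fg] - E[f]E[g]`. -/
noncomputable def cov {Ω : Type*} [MeasurableSpace Ω] (μ : Measure Ω) (f g : Ω → ℝ) : ℝ :=
  (∫ ω, f ω * g ω ∂μ) - (∫ ω, f ω ∂μ) * (∫ ω, g ω ∂μ)

/- With `Xᵢ` centred and orthonormal in `L²`, covariances of linear combinations are Euclidean inner
products of coefficient vectors. Since `(WᵀWX)ᵢ = ∑ⱼ (wᵢ·wⱼ) Xⱼ`, its covariance with `Xᵢ` is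
`wᵢ·wᵢ` and its variance is `∑ⱼ (wᵢ·wⱼ)²`, while `Var(Xᵢ) = 1`. -/

lemma cov_eq_integral_mul_of_integral_eq_zero {Ω : Type*} [MeasurableSpace Ω] {μ : Measure Ω}
    {f : Ω → ℝ} (g : Ω → ℝ) (hf : ∫ ω, f ω ∂μ = 0) :
    cov μ f g = ∫ ω, f ω * g ω ∂μ := by
  simp [cov, hf]

section OrthonormalFamily

variable {Ω ι : Type*} [MeasurableSpace Ω] {μ : Measure Ω} [Fintype ι] {X : ι → Ω → ℝ}

lemma integral_sum_mul_eq_zero (hX : ∀ j, Integrable (X j) μ) (h0 : ∀ j, ∫ ω, X j ω ∂μ = 0)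
    (a : ι → ℝ) : ∫ ω, ∑ j, a j * X j ω ∂μ = 0 := by
  rw [integral_finsetSum _ fun j _ => (hX j).const_mul (a j)]
  simp [integral_const_mul, h0]

variable [DecidableEq ι] (hL2 : ∀ j, MemLp (X j) 2 μ)
  (horth : ∀ j k, ∫ ω, X j ω * X k ω ∂μ = if j = k then 1 else 0)
include hL2 horth

lemma integral_mul_sum_of_orthonormal (i : ι) (b : ι → ℝ) :
    ∫ ω, X i ω * ∑ k, b k * X k ω ∂μ = b i := by
  have hint : ∀ k, Integrable (fun ω => b k * (X i ω * X k ω)) μ :=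
    fun k => ((hL2 i).integrable_mul (hL2 k)).const_mul (b k)
  calc ∫ ω, X i ω * ∑ k, b k * X k ω ∂μ = ∫ ω, ∑ k, b k * (X i ω * X k ω) ∂μ := by
        simp_rw [Finset.mul_sum, mul_left_comm]
    _ = ∑ k, b k * if i = k then 1 else 0 := by
        simp_rw [integral_finsetSum _ fun k _ => hint k, integral_const_mul, horth]
    _ = b i := by simp

lemma integral_sum_mul_sum_of_orthonormal (a b : ι → ℝ) :
    ∫ ω, (∑ j, a j * X j ω) * ∑ k, b k * X k ω ∂μ = ∑ j, a j * b j := by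
  have hsum : MemLp (fun ω => ∑ k, b k * X k ω) 2 μ :=
    memLp_finsetSum (f := fun k ω => b k * X k ω) _ fun k _ => (hL2 k).const_mul (b k)
  have hint : ∀ j, Integrable (fun ω => a j * (X j ω * ∑ k, b k * X k ω)) μ :=
    fun j => ((hL2 j).integrable_mul hsum).const_mul (a j)
  simp_rw [Finset.sum_mul, mul_assoc, integral_finsetSum _ fun j _ => hint j,
    integral_const_mul, integral_mul_sum_of_orthonormal hL2 horth]

end OrthonormalFamily

theorem capacity_eq_squared_correlation_general
    {Ω : Type*} [MeasurableSpace Ω] (μ : Measure Ω) [IsProbabilityMeasure μ]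
    {N D : ℕ} (X : Fin N → Ω → ℝ)
    (hL2 : ∀ i, MemLp (X i) 2 μ)
    (h1 : ∀ i, ∫ ω, X i ω ∂μ = 0)
    (hcov : ∀ i j, cov μ (X i) (X j) = if i = j then 1 else 0)
    (W : Matrix (Fin D) (Fin N) ℝ)
    (i : Fin N)
    (Y : Ω → ℝ) (hY : ∀ ω, Y ω = ∑ j, (∑ a, W a i * W a j) * X j ω) :
    (cov μ (X i) Y) ^ 2 / (cov μ (X i) (X i) * cov μ Y Y) = capacity W i := by
  set c : Fin N → ℝ := fun j => ∑ a, W a i * W a j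
  obtain rfl : Y = fun ω => ∑ j, c j * X j ω := funext hY
  have horth : ∀ j k, ∫ ω, X j ω * X k ω ∂μ = if j = k then 1 else 0 := fun j k => by
    rw [← cov_eq_integral_mul_of_integral_eq_zero _ (h1 j), hcov]
  have hY0 : ∫ ω, ∑ j, c j * X j ω ∂μ = 0 :=
    integral_sum_mul_eq_zero (fun j => (hL2 j).integrable one_le_two) h1 c
  rw [cov_eq_integral_mul_of_integral_eq_zero _ (h1 i),
    cov_eq_integral_mul_of_integral_eq_zero _ hY0,
    integral_mul_sum_of_orthonormal hL2 horth, integral_sum_mul_sum_of_orthonormal hL2 horth,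
    hcov, if_pos rfl, one_mul, capacity]
  simp_rw [sq]
  rfl

/-- If `E[Xᵢ] = 0`, `Cov(Xᵢ, Xⱼ) = δᵢⱼ`, and `wᵢ ≠ 0`, the squared Pearson
correlation between `Xᵢ` and `(WᵀWX)ᵢ` equals the capacity `Cᵢ(W)`. -/
theorem capacity_eq_squared_correlation
    {Ω : Type*} [MeasurableSpace Ω] (μ : Measure Ω) [IsProbabilityMeasure μ]
    {N D : ℕ} (X : Fin N → Ω → ℝ) (hmeas : ∀ i, Measurable (X i))
    (hL2 : ∀ i, MemLp (X i) 2 μ)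
    (h1 : ∀ i, ∫ ω, X i ω ∂μ = 0)
    (hcov : ∀ i j, cov μ (X i) (X j) = if i = j then 1 else 0)
    (W : Matrix (Fin D) (Fin N) ℝ)
    (i : Fin N) (hnz : Wᵀ i ≠ 0)
    (Y : Ω → ℝ) (hY : ∀ ω, Y ω = ∑ j, (∑ a, W a i * W a j) * X j ω) :
    (cov μ (X i) Y) ^ 2 / (cov μ (X i) (X i) * cov μ Y Y) = capacity W i :=
  capacity_eq_squared_correlation_general μ X hL2 h1 hcov W i Y hY
end

section
/- Let k > 1 and v ∈ ℝ. Define n*(C) = (k−1)v / ((k−3) + 2/C) and ℓ(C) = (k−1)(n*(C) − v)² − 2 n*(C)² + 2 n*(C)²/C for C ∈ (0, 1]. Then ℓ is differentiable on (0,1] with ℓ′(C) = −2(k−1)²v² / ((k−3)C + 2)² for every C ∈ (0,1]. -/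
/-- The optimal squared embedding length `n*(C) = (k-1)v / ((k-3) + 2/C)` for a single
feature of importance `v` at capacity `C`. -/
noncomputable def nstar (k v C : ℝ) : ℝ := (k - 1) * v / ((k - 3) + 2 / C)

/-- The single-feature loss after minimizing over the squared embedding length:
`ℓ(C) = (k-1)(n*(C) - v)² - 2 n*(C)² + 2 n*(C)²/C`. -/
noncomputable def lossC (k v C : ℝ) : ℝ :=
  (k - 1) * (nstar k v C - v) ^ 2 - 2 * (nstar k v C) ^ 2 + 2 * (nstar k v C) ^ 2 / C

/-!
Substituting `n*(C) = (k-1)vC / ((k-3)C + 2)` collapses `ℓ` to the rational function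
`2(k-1)v²(1-C) / ((k-3)C + 2)` wherever `C ≠ 0` and `(k-3)C + 2 ≠ 0`, and the quotient rule
gives the derivative there. For `k > 1` and `C ∈ (0, 1]` the denominator is positive.
-/

section

variable (k v : ℝ) {C : ℝ}

theorem nstar_eq (hC : C ≠ 0) : nstar k v C = (k - 1) * v * C / ((k - 3) * C + 2) := by
  rw [nstar, add_div' _ _ _ hC, div_div_eq_mul_div]

theorem lossC_eq (hC : C ≠ 0) (hD : (k - 3) * C + 2 ≠ 0) :
    lossC k v C = 2 * (k - 1) * v ^ 2 * (1 - C) / ((k - 3) * C + 2) := by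
  rw [lossC, nstar_eq k v hC]
  generalize hD' : (k - 3) * C + 2 = D at hD ⊢
  field_simp
  subst hD'
  ring

theorem hasDerivAt_lossC_closedForm (hD : (k - 3) * C + 2 ≠ 0) :
    HasDerivAt (fun x => 2 * (k - 1) * v ^ 2 * (1 - x) / ((k - 3) * x + 2))
      (-2 * (k - 1) ^ 2 * v ^ 2 / ((k - 3) * C + 2) ^ 2) C := by
  have hnum :
      HasDerivAt (fun x : ℝ => 2 * (k - 1) * v ^ 2 * (1 - x)) (-(2 * (k - 1) * v ^ 2)) C := by
    simpa using ((hasDerivAt_id C).const_sub 1).const_mul (2 * (k - 1) * v ^ 2)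
  have hden : HasDerivAt (fun x : ℝ => (k - 3) * x + 2) (k - 3) C := by
    simpa using ((hasDerivAt_id C).const_mul (k - 3)).add_const 2
  refine (hnum.div hden hD).congr_deriv ?_
  congr 1
  ring

theorem lossC_hasDerivAt_of_ne (hC : C ≠ 0) (hD : (k - 3) * C + 2 ≠ 0) :
    HasDerivAt (lossC k v) (-2 * (k - 1) ^ 2 * v ^ 2 / ((k - 3) * C + 2) ^ 2) C := by
  refine (hasDerivAt_lossC_closedForm k v hD).congr_of_eventuallyEq ?_
  have hden : ContinuousAt (fun x : ℝ => (k - 3) * x + 2) C := by fun_prop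
  filter_upwards [continuousAt_id.eventually_ne hC, hden.eventually_ne hD] with x hx hxD
  exact lossC_eq k v hx hxD

end

/-- For `k > 1`, the minimized single-feature loss `ℓ` is differentiable on
`(0, 1]` with `ℓ'(C) = -2(k-1)²v² / ((k-3)C + 2)²`. -/
theorem lossC_hasDerivAt (k v : ℝ) (hk : 1 < k) :
    ∀ C ∈ Set.Ioc (0 : ℝ) 1,
      HasDerivAt (lossC k v) (-2 * (k - 1) ^ 2 * v ^ 2 / ((k - 3) * C + 2) ^ 2) C := by
  rintro C ⟨hC0, hC1⟩
  have hD : 0 < (k - 3) * C + 2 := by nlinarith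
  exact lossC_hasDerivAt_of_ne k v hC0.ne' hD.ne'
end

section
/- Let k > 1 and v ≠ 0. Define n*(C) = (k−1)v / ((k−3) + 2/C) and ℓ(C) = (k−1)(n*(C) − v)² − 2 n*(C)² + 2 n*(C)²/C for C ∈ (0, 1]. Then ℓ is twice differentiable on (0,1] with ℓ″(C) = 4(k−3)(k−1)²v² / ((k−3)C + 2)³; in particular, ℓ is strictly convex on (0,1] when k > 3 (diminishing returns to capacity) and strictly concave on (0,1] when 1 < k < 3 (increasing returns to capacity). -/
open Filter Topology

section LossDerivatives

variable {k v C : ℝ}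

lemma lossC_eq_div (hC : C ≠ 0) (hd : (k - 3) * C + 2 ≠ 0) :
    lossC k v C = 2 * (k - 1) * v ^ 2 * (1 - C) / ((k - 3) * C + 2) := by
  have hden : (k - 3) + 2 / C = ((k - 3) * C + 2) / C := by field_simp
  unfold lossC nstar
  rw [hden]
  field_simp
  ring

lemma eventually_ne_zero_and_ne_zero (hC : C ≠ 0) (hd : (k - 3) * C + 2 ≠ 0) :
    ∀ᶠ x in 𝓝 C, x ≠ 0 ∧ (k - 3) * x + 2 ≠ 0 :=
  (continuousAt_id.eventually_ne hC).and
    ((by fun_prop : ContinuousAt (fun x => (k - 3) * x + 2) C).eventually_ne hd)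

lemma hasDerivAt_lossC (hC : C ≠ 0) (hd : (k - 3) * C + 2 ≠ 0) :
    HasDerivAt (lossC k v) (-2 * (k - 1) ^ 2 * v ^ 2 / ((k - 3) * C + 2) ^ 2) C := by
  have hnum := ((hasDerivAt_id C).const_sub 1).const_mul (2 * (k - 1) * v ^ 2)
  have hden := ((hasDerivAt_id C).const_mul (k - 3)).add_const 2
  have hquot := hnum.div hden hd
  have hloss : lossC k v =ᶠ[𝓝 C]
      fun x => 2 * (k - 1) * v ^ 2 * (1 - x) / ((k - 3) * x + 2) := by
    filter_upwards [eventually_ne_zero_and_ne_zero hC hd] with x hx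
    exact lossC_eq_div hx.1 hx.2
  refine (hquot.congr_deriv ?_).congr_of_eventuallyEq hloss
  simp only [id]
  field_simp
  ring

lemma hasDerivAt_deriv_lossC (hC : C ≠ 0) (hd : (k - 3) * C + 2 ≠ 0) :
    HasDerivAt (deriv (lossC k v))
      (4 * (k - 3) * (k - 1) ^ 2 * v ^ 2 / ((k - 3) * C + 2) ^ 3) C := by
  have hden : HasDerivAt (fun x => ((k - 3) * x + 2) ^ 2) _ C :=
    (((hasDerivAt_id C).const_mul (k - 3)).add_const 2).pow 2
  have hquot := (hasDerivAt_const C (-2 * (k - 1) ^ 2 * v ^ 2)).div hden (pow_ne_zero 2 hd)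
  have hderiv : deriv (lossC k v) =ᶠ[𝓝 C]
      fun x => -2 * (k - 1) ^ 2 * v ^ 2 / ((k - 3) * x + 2) ^ 2 := by
    filter_upwards [eventually_ne_zero_and_ne_zero hC hd] with x hx
    exact (hasDerivAt_lossC hx.1 hx.2).deriv
  refine (hquot.congr_deriv ?_).congr_of_eventuallyEq hderiv
  simp only [id]
  field_simp
  ring

lemma denom_pos_of_mem_Ioc (hk : 1 < k) (hC : C ∈ Set.Ioc (0 : ℝ) 1) :
    0 < (k - 3) * C + 2 := by
  linarith [mul_pos (sub_pos.2 hk) hC.1, hC.2]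

lemma exists_pos_iterate_deriv_two_lossC_eq (hk : 1 < k) (hv : v ≠ 0)
    (hC : C ∈ Set.Ioc (0 : ℝ) 1) : ∃ p > 0, deriv^[2] (lossC k v) C = (k - 3) * p := by
  have hden := denom_pos_of_mem_Ioc hk hC
  refine ⟨4 * (k - 1) ^ 2 * v ^ 2 / ((k - 3) * C + 2) ^ 3, ?_, ?_⟩
  · have := sub_pos.2 hk
    positivity
  · rw [Function.iterate_succ_apply, Function.iterate_one,
      (hasDerivAt_deriv_lossC hC.1.ne' hden.ne').deriv]
    ring

lemma continuousOn_lossC_Ioc (hk : 1 < k) : ContinuousOn (lossC k v) (Set.Ioc 0 1) :=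
  fun _ hC => (hasDerivAt_lossC hC.1.ne' (denom_pos_of_mem_Ioc hk hC).ne').continuousAt
    |>.continuousWithinAt

end LossDerivatives

/-- For `k > 1` and `v ≠ 0`, the minimized single-feature loss `ℓ` is twice
differentiable on `(0, 1]` with `ℓ''(C) = 4(k-3)(k-1)²v² / ((k-3)C + 2)³`; in particular
`ℓ` is strictly convex on `(0, 1]` when `k > 3` (diminishing returns) and strictly
concave there when `1 < k < 3` (increasing returns). -/
theorem lossC_second_deriv_and_convexity (k v : ℝ) (hk : 1 < k) (hv : v ≠ 0) :
    (∀ C ∈ Set.Ioc (0 : ℝ) 1,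
      HasDerivAt (deriv (lossC k v))
        (4 * (k - 3) * (k - 1) ^ 2 * v ^ 2 / ((k - 3) * C + 2) ^ 3) C) ∧
      (3 < k → StrictConvexOn ℝ (Set.Ioc (0 : ℝ) 1) (lossC k v)) ∧
      (k < 3 → StrictConcaveOn ℝ (Set.Ioc (0 : ℝ) 1) (lossC k v)) := by
  refine ⟨fun C hC => hasDerivAt_deriv_lossC hC.1.ne' (denom_pos_of_mem_Ioc hk hC).ne',
    fun h3 => strictConvexOn_of_deriv2_pos (convex_Ioc 0 1) (continuousOn_lossC_Ioc hk) ?_,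
    fun h3 => strictConcaveOn_of_deriv2_neg (convex_Ioc 0 1) (continuousOn_lossC_Ioc hk) ?_⟩
  all_goals
    intro C hC
    obtain ⟨p, hp, hsecond⟩ := exists_pos_iterate_deriv_two_lossC_eq hk hv (interior_subset hC)
    rw [hsecond]
  · exact mul_pos (sub_pos.2 h3) hp
  · exact mul_neg_of_neg_of_pos (sub_neg.2 h3) hp
end
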